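/- arXiv:2012.15135 — 12 statements merged into one kernel-verified Lean document; each statement's English description precedes it below -/
import Mathlib

section
/- Let s ≥ 1 and t_1, …, t_s ∈ {−1, 0, 1}, and set S*(X) = 1 − t_1 X − t_2 X^2 − ⋯ − t_s X^s. Let P(X) = 1 + a_1 X + ⋯ + a_d X^d ∈ ℤ[X] with d ≥ 1 and height H = max(1, max_{1≤i≤d} |a_i|). Then there exist polynomials A(X) ∈ ℤ[X] with deg A ≤ d and constant term A(0) = −1, and U(X) ∈ ℤ[X] with deg U ≤ s − 1 and height at most (2^d − 1)H + 2^d, such that A(X)·S*(X) = −P(X) + X^{d+1} U(X). -/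
/-!
Since `S*(0) = 1`, the series `c = P / S*` exists in `ℤ⟦X⟧`, and `A = -(c truncated at degree d)`
makes `A S* + P` divisible by `X^(d+1)`; the quotient `U` has degree `< s` because `deg S* ≤ s`.
Comparing coefficients in `c S* = P` gives `|c_k| ≤ |a_k| + ∑_{i<k} |c_i|`, so the partial sums
`σ_k = ∑_{i≤k} |c_i|` satisfy `σ_k + H ≤ 2 (σ_{k-1} + H)`, whence `σ_d ≤ (2^d - 1) H + 2^d`.
Every coefficient of `U` is a sum of terms `c_i s_j` with `i ≤ d` and `|s_j| ≤ 1` (the coefficients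
of `S*`), hence is at most `σ_d` in absolute value.
-/

open Polynomial Finset
open scoped PowerSeries

theorem sum_range_add_le_two_pow_mul {R : Type*} [Semiring R] [PartialOrder R] [IsOrderedRing R]
    {x : ℕ → R} {H : R} {n : ℕ} (hx : ∀ k < n, x (k + 1) ≤ H + ∑ i ∈ range (k + 1), x i) :
    ∑ i ∈ range (n + 1), x i + H ≤ 2 ^ n * (x 0 + H) := by
  induction n with
  | zero => simp
  | succ n ih =>
    calc ∑ i ∈ range (n + 2), x i + H
        = (∑ i ∈ range (n + 1), x i + H) + x (n + 1) := by rw [sum_range_succ]; abel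
      _ ≤ (∑ i ∈ range (n + 1), x i + H) + (∑ i ∈ range (n + 1), x i + H) := by
        rw [add_comm _ H]; gcongr; exact hx n n.lt_succ_self
      _ ≤ 2 ^ n * (x 0 + H) + 2 ^ n * (x 0 + H) := by
        have := ih fun k hk => hx k (hk.trans n.lt_succ_self)
        gcongr
      _ = 2 ^ (n + 1) * (x 0 + H) := by rw [pow_succ', mul_assoc, two_mul]

theorem natDegree_one_sub_sum_le {R : Type*} [CommRing R] (s : ℕ) (t : ℕ → R) :
    (1 - ∑ i ∈ Icc 1 s, C (t i) * X ^ i).natDegree ≤ s :=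
  (natDegree_sub_le _ _).trans <| max_le (by simp) <| natDegree_sum_le_of_forall_le _ _
    fun i hi => (natDegree_C_mul_X_pow_le _ _).trans (mem_Icc.mp hi).2

theorem PowerSeries.coeff_trunc_mul_of_lt {R : Type*} [CommSemiring R] {f : R⟦X⟧}
    {S P : R[X]} (h : f * S = P) {n k : ℕ} (hk : k < n) :
    (trunc n f * S).coeff k = P.coeff k := by
  rw [← Polynomial.coeff_coe, Polynomial.coe_mul, ← coeff_coe_trunc_of_lt hk, trunc_trunc_mul, h,
    coeff_coe_trunc_of_lt hk, Polynomial.coeff_coe]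

section OrderedRing

variable {R : Type*} [CommRing R] [LinearOrder R] [IsStrictOrderedRing R]

theorem PowerSeries.abs_coeff_le_of_mul_eq {f S g : R⟦X⟧} (hfS : f * S = g)
    (hS0 : constantCoeff S = 1) (hS : ∀ j, |coeff j S| ≤ 1) (k : ℕ) :
    |coeff k f| ≤ |coeff k g| + ∑ i ∈ range k, |coeff i f| := by
  have hg : coeff k g = ∑ i ∈ range k, coeff i f * coeff (k - i) S + coeff k f := by
    rw [← hfS, coeff_mul, Nat.sum_antidiagonal_eq_sum_range_succ_mk, sum_range_succ,
      Nat.sub_self, coeff_zero_eq_constantCoeff_apply, hS0, mul_one]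
  calc |coeff k f| = |coeff k g - ∑ i ∈ range k, coeff i f * coeff (k - i) S| := by
        rw [hg, add_sub_cancel_left]
    _ ≤ |coeff k g| + ∑ i ∈ range k, |coeff i f| * |coeff (k - i) S| := by
        grw [abs_sub, abs_sum_le_sum_abs]; simp only [abs_mul, le_refl]
    _ ≤ |coeff k g| + ∑ i ∈ range k, |coeff i f| := by
        gcongr with i
        exact mul_le_of_le_one_right (abs_nonneg _) (hS _)

theorem PowerSeries.sum_abs_coeff_add_le_two_pow_mul {f S g : R⟦X⟧} (hfS : f * S = g)
    (hS0 : constantCoeff S = 1) (hS : ∀ j, |coeff j S| ≤ 1) {n : ℕ} {H : R}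
    (hg : ∀ i, 1 ≤ i → i ≤ n → |coeff i g| ≤ H) :
    ∑ i ∈ range (n + 1), |coeff i f| + H ≤ 2 ^ n * (|coeff 0 f| + H) :=
  sum_range_add_le_two_pow_mul fun k hk =>
    (abs_coeff_le_of_mul_eq hfS hS0 hS (k + 1)).trans
      (by gcongr; exact hg (k + 1) k.succ_pos hk)

theorem Polynomial.abs_coeff_mul_le_sum_abs {A S : R[X]} {d : ℕ} (hA : A.natDegree ≤ d)
    (hS : ∀ j, |S.coeff j| ≤ 1) (n : ℕ) :
    |(A * S).coeff n| ≤ ∑ i ∈ range (d + 1), |A.coeff i| := by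
  conv_lhs => rw [as_sum_range_C_mul_X_pow' A (Nat.lt_succ_of_le hA), sum_mul, finsetSum_coeff]
  refine (abs_sum_le_sum_abs _ _).trans (sum_le_sum fun i _ => ?_)
  rw [mul_assoc, coeff_C_mul, abs_mul, coeff_X_pow_mul']
  refine mul_le_of_le_one_right (abs_nonneg _) ?_
  split_ifs
  · exact hS _
  · simp

theorem abs_coeff_one_sub_sum_le_one {s : ℕ} {t : ℕ → R} (ht : ∀ i ∈ Icc 1 s, |t i| ≤ 1)
    (j : ℕ) : |(1 - ∑ i ∈ Icc 1 s, C (t i) * X ^ i).coeff j| ≤ 1 := by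
  simp only [coeff_sub, coeff_one, finsetSum_coeff, coeff_C_mul_X_pow, sum_ite_eq]
  rcases j with _ | j
  · simp
  · simp only [Nat.add_one_ne_zero, if_false, zero_sub, abs_neg]
    split_ifs with hj
    · exact ht _ hj
    · simp

theorem exists_coeff_mul_eq_neg_and_sum_abs_coeff_le {S P : R[X]} {d : ℕ} {H : R}
    (hS0 : S.coeff 0 = 1) (hS1 : ∀ j, |S.coeff j| ≤ 1) (hP0 : P.coeff 0 = 1)
    (hPH : ∀ i, 1 ≤ i → i ≤ d → |P.coeff i| ≤ H) :
    ∃ A : R[X], A.natDegree ≤ d ∧ A.coeff 0 = -1 ∧ (∀ k ≤ d, (A * S).coeff k = -P.coeff k) ∧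
      ∑ i ∈ range (d + 1), |A.coeff i| + H ≤ 2 ^ d * (1 + H) := by
  have hS0' : PowerSeries.constantCoeff (S : R⟦X⟧) = 1 := by
    rwa [← PowerSeries.coeff_zero_eq_constantCoeff_apply, Polynomial.coeff_coe]
  obtain ⟨f, hf⟩ : ∃ f : R⟦X⟧, f * S = P :=
    ⟨P * PowerSeries.invOfUnit (S : R⟦X⟧) 1, by
      rw [mul_assoc, PowerSeries.invOfUnit_mul _ _ (by simpa using hS0'), mul_one]⟩
  have hf0 : PowerSeries.coeff 0 f = 1 := by
    have := congrArg PowerSeries.constantCoeff hf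
    rwa [map_mul, hS0', mul_one, ← PowerSeries.coeff_zero_eq_constantCoeff_apply,
      ← PowerSeries.coeff_zero_eq_constantCoeff_apply, Polynomial.coeff_coe, hP0] at this
  have hsum := PowerSeries.sum_abs_coeff_add_le_two_pow_mul hf hS0'
    (fun j => Polynomial.coeff_coe (φ := S) j ▸ hS1 j)
    (fun i hi hid => Polynomial.coeff_coe (φ := P) i ▸ hPH i hi hid)
  refine ⟨-PowerSeries.trunc (d + 1) f, ?_, by simp [PowerSeries.coeff_trunc, hf0], fun k hk => ?_,
    ?_⟩
  · rw [natDegree_neg]; exact Nat.le_of_lt_succ (PowerSeries.natDegree_trunc_lt f d)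
  · rw [neg_mul, coeff_neg, PowerSeries.coeff_trunc_mul_of_lt hf (Nat.lt_succ_of_le hk)]
  · have htrunc : ∀ i ∈ range (d + 1), |(-PowerSeries.trunc (d + 1) f).coeff i| =
        |PowerSeries.coeff i f| := fun i hi => by
      rw [coeff_neg, abs_neg, PowerSeries.coeff_trunc, if_pos (mem_range.mp hi)]
    rwa [hf0, abs_one, ← sum_congr rfl htrunc] at hsum

theorem exists_eq_neg_add_X_pow_mul {A S P : R[X]} {d s : ℕ} (hA : A.natDegree ≤ d)
    (hS : S.natDegree ≤ s) (hP : P.natDegree ≤ d) (hS1 : ∀ j, |S.coeff j| ≤ 1)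
    (hlow : ∀ k ≤ d, (A * S).coeff k = -P.coeff k) :
    ∃ U : R[X], U.natDegree ≤ s - 1 ∧ (∀ j, |U.coeff j| ≤ ∑ i ∈ range (d + 1), |A.coeff i|) ∧
      A * S = -P + X ^ (d + 1) * U := by
  obtain ⟨U, hU⟩ : X ^ (d + 1) ∣ A * S + P := X_pow_dvd_iff.mpr fun k hk => by
    rw [coeff_add, hlow k (Nat.le_of_lt_succ hk), neg_add_cancel]
  have hUcoeff : ∀ j, U.coeff j = (A * S).coeff (d + 1 + j) := fun j => by
    have := congrArg (coeff · (d + 1 + j)) hU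
    simp only [coeff_add, coeff_X_pow_mul', le_add_iff_nonneg_right, zero_le, if_true,
      add_tsub_cancel_left, coeff_eq_zero_of_natDegree_lt (hP.trans_lt (by omega : d < d + 1 + j)),
      add_zero] at this
    exact this.symm
  refine ⟨U, ?_, fun j => hUcoeff j ▸ abs_coeff_mul_le_sum_abs hA hS1 _, by linear_combination hU⟩
  refine natDegree_le_iff_coeff_eq_zero.mpr fun j hj => ?_
  rw [hUcoeff]
  exact coeff_eq_zero_of_natDegree_lt ((natDegree_mul_le.trans (add_le_add hA hS)).trans_lt
    (by omega))

end OrderedRing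

theorem stmt_1_general
    (s : ℕ)
    (t : ℕ → ℤ) (ht : ∀ i, 1 ≤ i → i ≤ s → t i = -1 ∨ t i = 0 ∨ t i = 1)
    (Sstar : Polynomial ℤ)
    (hS : Sstar = 1 - ∑ i ∈ Finset.Icc 1 s, C (t i) * X ^ i)
    (d : ℕ) (a : ℕ → ℤ) (ha0 : a 0 = 1)
    (P : Polynomial ℤ)
    (hP : P = ∑ i ∈ Finset.range (d + 1), C (a i) * X ^ i)
    (H : ℕ) (hH : H = max 1 ((Finset.Icc 1 d).sup fun i => (a i).natAbs)) :
    ∃ A U : Polynomial ℤ,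
      A.natDegree ≤ d ∧ A.coeff 0 = -1 ∧
      U.natDegree ≤ s - 1 ∧
      (∀ j, |U.coeff j| ≤ (2 ^ d - 1) * (H : ℤ) + 2 ^ d) ∧
      A * Sstar = -P + X ^ (d + 1) * U := by
  have hS1 : ∀ j, |Sstar.coeff j| ≤ 1 := hS ▸ abs_coeff_one_sub_sum_le_one fun i hi => by
    rcases ht i (mem_Icc.mp hi).1 (mem_Icc.mp hi).2 with h | h | h <;> simp [h]
  have hPcoeff : ∀ i, P.coeff i = if i < d + 1 then a i else 0 := by
    simp [hP, finsetSum_coeff]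
  have hPH : ∀ i, 1 ≤ i → i ≤ d → |P.coeff i| ≤ H := fun i hi hid => by
    rw [hPcoeff, if_pos (Nat.lt_succ_of_le hid), hH, Int.abs_eq_natAbs]
    exact_mod_cast le_max_of_le_right
      (le_sup (f := fun i => (a i).natAbs) (mem_Icc.mpr ⟨hi, hid⟩))
  obtain ⟨A, hA, hA0, hlow, hAsum⟩ :=
    exists_coeff_mul_eq_neg_and_sum_abs_coeff_le (by simp [hS]) hS1 (by simp [hPcoeff, ha0]) hPH
  have hPdeg : P.natDegree ≤ d := natDegree_le_iff_coeff_eq_zero.mpr fun i hi => by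
    simp [hPcoeff, show ¬i < d + 1 by omega]
  obtain ⟨U, hU, hUcoeff, hAU⟩ :=
    exists_eq_neg_add_X_pow_mul hA (hS ▸ natDegree_one_sub_sum_le s t) hPdeg hS1 hlow
  exact ⟨A, U, hA, hA0, hU, fun j => by linear_combination hUcoeff j + hAsum, hAU⟩

/-- The rewriting-trail polynomial identity: after `d` steps of the rewriting
trail from `S*` to `P`, one gets `A · S* = -P + X^{d+1} U` with explicit
bounds on the degree and height of `A` and `U`. -/
theorem stmt_1
    (s : ℕ) (hs : 1 ≤ s)
    (t : ℕ → ℤ) (ht : ∀ i, 1 ≤ i → i ≤ s → t i = -1 ∨ t i = 0 ∨ t i = 1)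
    (Sstar : Polynomial ℤ)
    (hS : Sstar = 1 - ∑ i ∈ Finset.Icc 1 s, C (t i) * X ^ i)
    (d : ℕ) (hd : 1 ≤ d) (a : ℕ → ℤ) (ha0 : a 0 = 1)
    (P : Polynomial ℤ)
    (hP : P = ∑ i ∈ Finset.range (d + 1), C (a i) * X ^ i)
    (H : ℕ) (hH : H = max 1 ((Finset.Icc 1 d).sup fun i => (a i).natAbs)) :
    ∃ A U : Polynomial ℤ,
      A.natDegree ≤ d ∧ A.coeff 0 = -1 ∧
      U.natDegree ≤ s - 1 ∧
      (∀ j, |U.coeff j| ≤ (2 ^ d - 1) * (H : ℤ) + 2 ^ d) ∧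
      A * Sstar = -P + X ^ (d + 1) * U :=
  stmt_1_general s t ht Sstar hS d a ha0 P hP H hH
end

section
/- Let s ≥ 1 and t_1, …, t_s ∈ {−1, 0, 1}, and let γ > 1 be a real number such that 1 − t_1 γ^{−1} − t_2 γ^{−2} − ⋯ − t_s γ^{−s} = 0. Let P(X) = 1 + a_1 X + ⋯ + a_d X^d ∈ ℤ[X] with d ≥ 1 and height H = max(1, max_{1≤i≤d} |a_i|). Then there exist integers h_0, h_1, …, h_{s−1} with |h_j| ≤ (2^d − 1)H + 2^d for all j, such that P(γ^{−1}) = Σ_{j=0}^{s−1} h_j γ^{−d−1−j}. -/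
/-!
Write `S*(X) = 1 - T(X)`, so `T(γ⁻¹) = 1`. Starting from `P` and going through the positions
`k = 0, 1, …, d`, replace the current term `c_k X^k` by `c_k X^k T(X)`: this does not change
the value at `γ⁻¹`, kills the coefficient at `X^k` (as `T(0) = 0`) and only touches higher
positions.
After `d + 1` steps all coefficients sit at `X^{d+1}, …, X^{d+s}`. Since `|t_j| ≤ 1`, after the
steps `0, …, k` every remaining coefficient differs from that of `P` by at most `B_k`, where
`B_0 = 1` (from `a_0 = 1`) and `B_{k+1} = 2 B_k + H` (the eliminated coefficient is at most
`H + B_k`), i.e. `B_k = (2^k - 1) H + 2^k`.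
-/

open Polynomial

namespace Polynomial

section Monomials

variable {R : Type*}

theorem coeff_sum_C_mul_X_pow [Semiring R] (s : Finset ℕ) (f : ℕ → R) (n : ℕ) :
    (∑ i ∈ s, C (f i) * X ^ i).coeff n = if n ∈ s then f n else 0 := by
  simp [finsetSum_coeff]

theorem natDegree_sum_C_mul_X_pow_le [Semiring R] {s : Finset ℕ} (f : ℕ → R) {n : ℕ}
    (hs : ∀ i ∈ s, i ≤ n) : (∑ i ∈ s, C (f i) * X ^ i).natDegree ≤ n :=
  natDegree_sum_le_of_forall_le _ _ fun i hi => (natDegree_C_mul_X_pow_le _ _).trans (hs i hi)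

theorem abs_coeff_sum_C_mul_X_pow_le [Ring R] [LinearOrder R] [IsOrderedRing R]
    {s : Finset ℕ} {f : ℕ → R} {B : R} (hB : 0 ≤ B) (hf : ∀ i ∈ s, |f i| ≤ B) (n : ℕ) :
    |(∑ i ∈ s, C (f i) * X ^ i).coeff n| ≤ B := by
  rw [coeff_sum_C_mul_X_pow]
  split_ifs with hn
  exacts [hf n hn, by rwa [abs_zero]]

end Monomials

section Trail

variable {R : Type*} [CommRing R]

/-- `rewriteTrail T P k` is `P` after eliminating the coefficients at `X^0, …, X^{k-1}` in turn,
each by the rewriting `X^k ↦ X^k T(X)`. -/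
noncomputable def rewriteTrail (T P : R[X]) : ℕ → R[X]
  | 0 => P
  | k + 1 => rewriteTrail T P k + C ((rewriteTrail T P k).coeff k) * X ^ k * (T - 1)

variable (T P : R[X])

theorem aeval_rewriteTrail {A : Type*} [CommRing A] [Algebra R A] {x : A} (hT : aeval x T = 1)
    (k : ℕ) : aeval x (rewriteTrail T P k) = aeval x P := by
  induction k with
  | zero => rfl
  | succ k ih => simp [rewriteTrail, ih, hT]

theorem coeff_rewriteTrail_succ (k i : ℕ) :
    (rewriteTrail T P (k + 1)).coeff i = (rewriteTrail T P k).coeff i +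
      if k ≤ i then (rewriteTrail T P k).coeff k * (T - 1).coeff (i - k) else 0 := by
  rw [rewriteTrail, coeff_add, mul_assoc, coeff_C_mul, coeff_X_pow_mul', mul_ite, mul_zero]

theorem coeff_rewriteTrail_succ_of_lt {k i : ℕ} (h : k < i) :
    (rewriteTrail T P (k + 1)).coeff i =
      (rewriteTrail T P k).coeff i + (rewriteTrail T P k).coeff k * T.coeff (i - k) := by
  rw [coeff_rewriteTrail_succ, if_pos h.le, coeff_sub, coeff_one, if_neg (by omega), sub_zero]

theorem coeff_rewriteTrail_of_lt (hT : T.coeff 0 = 0) {k i : ℕ} (h : i < k) :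
    (rewriteTrail T P k).coeff i = 0 := by
  induction k with
  | zero => omega
  | succ k ih =>
    rw [coeff_rewriteTrail_succ]
    rcases Nat.lt_succ_iff_lt_or_eq.mp h with h | rfl
    · rw [ih h, if_neg (by omega), add_zero]
    · simp [hT]

theorem natDegree_rewriteTrail_le {n m : ℕ} (hP : P.natDegree ≤ n) (hT : T.natDegree ≤ m) :
    ∀ k ≤ n + 1, (rewriteTrail T P k).natDegree ≤ n + m := by
  intro k hk
  induction k with
  | zero => exact hP.trans (Nat.le_add_right n m)
  | succ k ih =>
    have hT1 : (T - 1).natDegree ≤ m :=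
      (natDegree_sub_le T 1).trans (max_le hT (by simp))
    refine (natDegree_add_le _ _).trans (max_le (ih (by omega)) ?_)
    calc (C _ * X ^ k * (T - 1)).natDegree ≤ k + m :=
          natDegree_mul_le_of_le (natDegree_C_mul_X_pow_le _ k) hT1
      _ ≤ n + m := by omega

theorem aeval_eq_sum_coeff_rewriteTrail {A : Type*} [CommRing A] [Algebra R A] {x : A}
    {n m : ℕ} (hT0 : T.coeff 0 = 0) (hTx : aeval x T = 1) (hP : P.natDegree ≤ n)
    (hT : T.natDegree ≤ m) :
    aeval x P = ∑ j ∈ Finset.range m,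
      (rewriteTrail T P (n + 1)).coeff (n + 1 + j) • x ^ (n + 1 + j) := by
  have hdeg : (rewriteTrail T P (n + 1)).natDegree < n + 1 + m := by
    have := natDegree_rewriteTrail_le T P hP hT (n + 1) le_rfl
    omega
  rw [← aeval_rewriteTrail T P hTx (n + 1), aeval_eq_sum_range' hdeg, Finset.sum_range_add,
    Finset.sum_eq_zero, zero_add]
  intro i hi
  rw [coeff_rewriteTrail_of_lt T P hT0 (Finset.mem_range.mp hi), zero_smul]

end Trail

theorem abs_coeff_rewriteTrail_succ_le {R : Type*} [CommRing R] [LinearOrder R]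
    [IsStrictOrderedRing R] {T P : R[X]} {H : R} (hT : ∀ j, |T.coeff j| ≤ 1)
    (hP0 : |P.coeff 0| ≤ 1) (hP : ∀ i, 1 ≤ i → |P.coeff i| ≤ H) (k : ℕ) :
    ∀ i, k < i →
      |(rewriteTrail T P (k + 1)).coeff i| ≤ |P.coeff i| + ((2 ^ k - 1) * H + 2 ^ k) := by
  induction k with
  | zero =>
    intro i hi
    rw [coeff_rewriteTrail_succ_of_lt _ _ hi]
    calc |P.coeff i + P.coeff 0 * T.coeff (i - 0)|
        ≤ |P.coeff i| + |P.coeff 0| * |T.coeff (i - 0)| := by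
          rw [← abs_mul]; exact abs_add_le _ _
      _ ≤ |P.coeff i| + 1 * 1 := by gcongr; exact hT _
      _ = _ := by ring
  | succ k ih =>
    intro i hi
    set Q := rewriteTrail T P (k + 1)
    have hQi := ih i (by omega)
    have hQk : |Q.coeff (k + 1)| ≤ H + ((2 ^ k - 1) * H + 2 ^ k) :=
      (ih (k + 1) (by omega)).trans (by gcongr; exact hP _ (by omega))
    rw [coeff_rewriteTrail_succ_of_lt _ _ hi]
    calc |Q.coeff i + Q.coeff (k + 1) * T.coeff (i - (k + 1))|
        ≤ |Q.coeff i| + |Q.coeff (k + 1)| * |T.coeff (i - (k + 1))| := by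
          rw [← abs_mul]; exact abs_add_le _ _
      _ ≤ |Q.coeff i| + |Q.coeff (k + 1)| * 1 := by gcongr; exact hT _
      _ ≤ _ := by linear_combination hQi + hQk

end Polynomial

theorem stmt_2_general
    (s : ℕ)
    (t : ℕ → ℤ) (ht : ∀ i, 1 ≤ i → i ≤ s → t i = -1 ∨ t i = 0 ∨ t i = 1)
    (γ : ℝ)
    (hroot : 1 - ∑ i ∈ Finset.Icc 1 s, (t i : ℝ) * γ⁻¹ ^ i = 0)
    (d : ℕ) (a : ℕ → ℤ) (ha0 : a 0 = 1)
    (H : ℕ) (hH : H = max 1 ((Finset.Icc 1 d).sup fun i => (a i).natAbs)) :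
    ∃ h : ℕ → ℤ,
      (∀ j, j < s → |h j| ≤ (2 ^ d - 1) * (H : ℤ) + 2 ^ d) ∧
      ∑ i ∈ Finset.range (d + 1), (a i : ℝ) * γ⁻¹ ^ i
        = ∑ j ∈ Finset.range s, (h j : ℝ) * γ⁻¹ ^ (d + 1 + j) := by
  set T : ℤ[X] := ∑ i ∈ Finset.Icc 1 s, C (t i) * X ^ i
  set P : ℤ[X] := ∑ i ∈ Finset.range (d + 1), C (a i) * X ^ i
  have hTγ : aeval γ⁻¹ T = 1 := by
    simp only [T, map_sum, map_mul, eq_intCast, map_intCast, map_pow, aeval_X]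
    linarith
  have hT : ∀ j, |T.coeff j| ≤ 1 := abs_coeff_sum_C_mul_X_pow_le zero_le_one fun i hi => by
    rcases ht i (Finset.mem_Icc.mp hi).1 (Finset.mem_Icc.mp hi).2 with h | h | h <;> simp [h]
  have ha : ∀ i ∈ Finset.range (d + 1), |a i| ≤ H := by
    intro i hi
    rcases Nat.eq_zero_or_pos i with rfl | hi0
    · simp [ha0, hH]
    · have := Finset.le_sup (f := fun i => (a i).natAbs)
        (Finset.mem_Icc.mpr ⟨hi0, Nat.lt_succ_iff.mp (Finset.mem_range.mp hi)⟩)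
      rw [Int.abs_eq_natAbs]
      exact_mod_cast hH ▸ le_max_of_le_right this
  have hP : ∀ i, |P.coeff i| ≤ H := abs_coeff_sum_C_mul_X_pow_le (Nat.cast_nonneg H) ha
  have hPdeg : P.natDegree ≤ d :=
    natDegree_sum_C_mul_X_pow_le _ fun i hi => Nat.lt_succ_iff.mp (Finset.mem_range.mp hi)
  have hTdeg : T.natDegree ≤ s :=
    natDegree_sum_C_mul_X_pow_le _ fun i hi => (Finset.mem_Icc.mp hi).2
  refine ⟨fun j => (rewriteTrail T P (d + 1)).coeff (d + 1 + j), fun j _ => ?_, ?_⟩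
  · have hPj : P.coeff (d + 1 + j) = 0 := coeff_eq_zero_of_natDegree_lt (by omega)
    simpa [hPj] using abs_coeff_rewriteTrail_succ_le hT (by simp [P, ha0]) (fun i _ => hP i) d
      (d + 1 + j) (by omega)
  · have hT0 : T.coeff 0 = 0 := by simp [T]
    simpa [P, zsmul_eq_mul] using aeval_eq_sum_coeff_rewriteTrail T P hT0 hTγ hPdeg hTdeg

/-- The value `P(γ⁻¹)` can be written as a finite sum
`Σ_{j=0}^{s-1} h_j γ^{-d-1-j}` with integer digits `h_j` of size at most
`(2^d - 1)H + 2^d`. -/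
theorem stmt_2
    (s : ℕ) (hs : 1 ≤ s)
    (t : ℕ → ℤ) (ht : ∀ i, 1 ≤ i → i ≤ s → t i = -1 ∨ t i = 0 ∨ t i = 1)
    (γ : ℝ) (hγ : 1 < γ)
    (hroot : 1 - ∑ i ∈ Finset.Icc 1 s, (t i : ℝ) * γ⁻¹ ^ i = 0)
    (d : ℕ) (hd : 1 ≤ d) (a : ℕ → ℤ) (ha0 : a 0 = 1)
    (H : ℕ) (hH : H = max 1 ((Finset.Icc 1 d).sup fun i => (a i).natAbs)) :
    ∃ h : ℕ → ℤ,
      (∀ j, j < s → |h j| ≤ (2 ^ d - 1) * (H : ℤ) + 2 ^ d) ∧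
      ∑ i ∈ Finset.range (d + 1), (a i : ℝ) * γ⁻¹ ^ i
        = ∑ j ∈ Finset.range s, (h j : ℝ) * γ⁻¹ ^ (d + 1 + j) :=
  stmt_2_general s t ht γ hroot d a ha0 H hH
end

section
/- Let α be an algebraic integer of degree d with |α| > 1, whose Galois conjugates α_1 = α, α_2, …, α_d (the complex roots of its minimal polynomial) all satisfy |α_i| ≠ 1; order them so that |α_1| ≥ |α_2| ≥ ⋯ ≥ |α_d| and let j_0 = #{i : |α_i| > 1} (so j_0 ≥ 1). Then for every real t ≥ 1 there exists an integer N ≥ 1 such that the monic polynomial P_{α,N}(X) = ∏_{i=1}^d (X − α_i^N) has integer coefficients and, writing P_{α,N}(X) = Σ_{j=0}^d g_j(N) X^{d−j} with g_0(N) = 1, one has |g_{j_0}(N)| > t · Σ_{j ∈ {0,1,…,d}, j ≠ j_0} |g_j(N)|. In particular Q(X) := P_{α,N}(X^N) is an integer polynomial of degree dN vanishing at α whose coefficient of X^{(d−j_0)N} exceeds t times the sum of the absolute values of all its other coefficients. -/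
/-!
Up to sign, the coefficients of `∏ (X - αᵢ ^ N)` are the elementary symmetric functions
`e_j(α₁ ^ N, …, α_d ^ N)`. These are symmetric integer polynomials in the conjugates, hence
integer polynomials in the coefficients of the minimal polynomial of `α`, so they are integers.

Expanding `e_j(α ^ N) = ∑_{#A = j} (∏_{i ∈ A} αᵢ) ^ N`, the subset `S₀ = {i | 1 < ‖αᵢ‖}` gives
the strictly largest `‖∏_{i ∈ A} αᵢ‖`, because no conjugate has absolute value `1`. Hence for
large `N` the single term `(∏_{i ∈ S₀} αᵢ) ^ N` outweighs `t + 1` times the sum of all the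
other terms, which bounds both the other coefficients and the rest of `e_{#S₀}`.
-/

open Polynomial Finset Filter

theorem Finset.prod_X_sub_C_eq_sum_esymm {R ι : Type*} [CommRing R] [Fintype ι] (r : ι → R) :
    ∏ i, (X - C (r i)) = ∑ j ∈ range (Fintype.card ι + 1),
      C ((-1) ^ j * (univ.val.map r).esymm j) * X ^ (Fintype.card ι - j) := by
  have := Multiset.prod_X_sub_X_eq_sum_esymm (univ.val.map r)
  simp only [Multiset.map_map, Multiset.card_map, card_val, Finset.card_univ] at this
  rw [prod_eq_multiset_prod, ← Function.comp_def (fun t => X - C t) r, this]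
  exact sum_congr rfl fun j _ => by simp [mul_assoc]

section Lifts

variable {R S ι : Type*} [CommRing R] [CommRing S] [Algebra R S] [Fintype ι]

theorem Polynomial.esymm_mem_range_of_prod_X_sub_C_mem_lifts {r : ι → S}
    (h : ∏ i, (X - C (r i)) ∈ lifts (algebraMap R S)) (k : ℕ) :
    (univ.val.map r).esymm k ∈ (algebraMap R S).range := by
  set s := univ.val.map r
  rcases le_or_gt k (Multiset.card s) with hk | hk
  · have hcoeff := Multiset.prod_X_sub_C_coeff s (Nat.sub_le _ k)
    rw [Nat.sub_sub_self hk, Multiset.map_map, ← prod_eq_multiset_prod] at hcoeff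
    simp only [Function.comp_apply] at hcoeff
    have hesymm : s.esymm k = (-1) ^ k * (∏ i, (X - C (r i))).coeff (Multiset.card s - k) := by
      rw [hcoeff, ← mul_assoc, ← mul_pow, neg_one_mul, neg_neg, one_pow, one_mul]
    rw [hesymm]
    exact mul_mem (pow_mem (neg_mem (one_mem _)) _)
      ((lifts_iff_coeff_lifts _).1 h (Multiset.card s - k))
  · rw [Multiset.esymm, Multiset.powersetCard_eq_empty _ hk]
    exact zero_mem _

namespace MvPolynomial

theorem IsSymmetric.aeval_mem_range {φ : MvPolynomial ι R} (hφ : φ.IsSymmetric) {r : ι → S}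
    (h : ∀ k, aeval r (esymm ι R k) ∈ (algebraMap R S).range) :
    aeval r φ ∈ (algebraMap R S).range := by
  obtain ⟨q, hq⟩ := esymmAlgHom_surjective R le_rfl ⟨φ, hφ⟩ (n := Fintype.card ι)
  have hφq : φ = aeval (fun i : Fin (Fintype.card ι) => esymm ι R (i + 1)) q := by
    rw [← esymmAlgHom_apply, hq]
  choose y hy using fun i : Fin (Fintype.card ι) => h (i + 1)
  refine ⟨aeval y q, ?_⟩
  rw [hφq, ← AlgHom.comp_apply, comp_aeval, ← aeval_algebraMap_apply]
  congr 2
  exact _root_.funext hy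

end MvPolynomial

theorem Multiset.esymm_map_pow_mem_range {r : ι → S}
    (h : ∀ k, (univ.val.map r).esymm k ∈ (algebraMap R S).range) (N k : ℕ) :
    (univ.val.map (r · ^ N)).esymm k ∈ (algebraMap R S).range := by
  have hsymm : (MvPolynomial.expand N (MvPolynomial.esymm ι R k)).IsSymmetric := fun e => by
    rw [MvPolynomial.rename_expand, MvPolynomial.esymm_isSymmetric]
  have := hsymm.aeval_mem_range (r := r) fun k => by
    rw [MvPolynomial.aeval_esymm_eq_multiset_esymm]
    exact h k
  simpa [MvPolynomial.expand, MvPolynomial.aeval_bind₁,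
    MvPolynomial.aeval_esymm_eq_multiset_esymm] using this

end Lifts

theorem Finset.prod_lt_prod_filter_one_lt {ι : Type*} [Fintype ι] [DecidableEq ι] {x : ι → ℝ}
    (h0 : ∀ i, 0 ≤ x i) (h1 : ∀ i, x i ≠ 1) {A : Finset ι}
    (hA : A ≠ univ.filter (1 < x ·)) :
    ∏ i ∈ A, x i < ∏ i ∈ univ.filter (1 < x ·), x i := by
  set S₀ := univ.filter (1 < x ·)
  have hgt : ∀ i ∈ S₀ \ A, 1 < x i := fun i hi => (mem_filter.1 (mem_sdiff.1 hi).1).2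
  have hlt : ∀ i ∈ A \ S₀, x i < 1 := fun i hi =>
    (not_lt.1 fun h => (mem_sdiff.1 hi).2 (mem_filter.2 ⟨mem_univ i, h⟩)).lt_of_ne (h1 i)
  have hsplit : (∏ i ∈ S₀ \ A, x i) * ∏ i ∈ A, x i = (∏ i ∈ A \ S₀, x i) * ∏ i ∈ S₀, x i := by
    rw [← union_sdiff_left, prod_sdiff subset_union_left, ← union_sdiff_right,
      prod_sdiff subset_union_right]
  have hS₀ : 1 ≤ ∏ i ∈ S₀, x i := one_le_prod fun i hi => (mem_filter.1 hi).2.le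
  have hA0 : 0 ≤ ∏ i ∈ A, x i := prod_nonneg fun i _ => h0 i
  have hgt' : 1 ≤ ∏ i ∈ S₀ \ A, x i := one_le_prod fun i hi => (hgt i hi).le
  have hlt' : ∏ i ∈ A \ S₀, x i ≤ 1 := prod_le_one (fun i _ => h0 i) fun i hi => (hlt i hi).le
  by_cases hsub : A ⊆ S₀
  · obtain ⟨i, hi⟩ := sdiff_nonempty.2 fun h => hA (Subset.antisymm hsub h)
    have : x i ≤ ∏ j ∈ S₀ \ A, x j := by
      simpa using prod_le_prod_of_subset_of_one_le (f := x) (singleton_subset_iff.2 hi)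
        (fun j _ => h0 j) fun j hj _ => (hgt j hj).le
    nlinarith [hgt i hi]
  · obtain ⟨i, hi⟩ := sdiff_nonempty.2 hsub
    have : ∏ j ∈ A \ S₀, x j ≤ x i := by
      simpa using prod_le_prod_of_subset_of_le_one (singleton_subset_iff.2 hi)
        (fun j _ => h0 j) fun j hj _ => (hlt j hj).le
    nlinarith [hlt i hi]

theorem eventually_mul_sum_pow_lt {κ : Type*} (s : Finset κ) {a : κ → ℝ} {b : ℝ} (hb : 0 < b)
    (ha : ∀ k ∈ s, |a k| < b) (c : ℝ) : ∀ᶠ N in atTop, c * ∑ k ∈ s, a k ^ N < b ^ N := by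
  have hratio : ∀ k ∈ s, |a k / b| < 1 := fun k hk => by
    rw [abs_div, abs_of_pos hb, div_lt_one hb]
    exact ha k hk
  have hlim : Tendsto (fun N => c * ∑ k ∈ s, (a k / b) ^ N) atTop (nhds 0) := by
    simpa using tendsto_const_nhds.mul (tendsto_finsetSum s fun k hk =>
      tendsto_pow_atTop_nhds_zero_of_abs_lt_one (hratio k hk))
  filter_upwards [hlim.eventually (gt_mem_nhds one_pos)] with N hN
  have hbN : 0 < b ^ N := pow_pos hb N
  calc c * ∑ k ∈ s, a k ^ N = b ^ N * (c * ∑ k ∈ s, (a k / b) ^ N) := by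
        simp only [div_pow, ← sum_div]; field_simp
    _ < b ^ N * 1 := by gcongr
    _ = b ^ N := mul_one _

section PowersetCard

variable {E ι : Type*} [SeminormedAddCommGroup E] [Fintype ι] [DecidableEq ι]
  (y : Finset ι → E) (S₀ : Finset ι)

theorem sum_norm_sum_powersetCard_le (n : ℕ) :
    ∑ j ∈ (range n).erase #S₀, ‖∑ A ∈ powersetCard j univ, y A‖ ≤
      ∑ A ∈ univ.erase S₀, ‖y A‖ := by
  calc ∑ j ∈ (range n).erase #S₀, ‖∑ A ∈ powersetCard j univ, y A‖
      ≤ ∑ j ∈ (range n).erase #S₀, ∑ A ∈ powersetCard j univ, ‖y A‖ :=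
        sum_le_sum fun j _ => norm_sum_le _ _
    _ = ∑ A ∈ ((range n).erase #S₀).biUnion (powersetCard · univ), ‖y A‖ :=
        (sum_biUnion ((pairwise_disjoint_powersetCard univ).set_pairwise _)).symm
    _ ≤ ∑ A ∈ univ.erase S₀, ‖y A‖ := by
        refine sum_le_sum_of_subset_of_nonneg (fun A hA => ?_) fun _ _ _ => norm_nonneg _
        obtain ⟨j, hj, hAj⟩ := mem_biUnion.1 hA
        refine mem_erase.2 ⟨?_, mem_univ A⟩
        rintro rfl
        exact (mem_erase.1 hj).1 (mem_powersetCard.1 hAj).2.symm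

theorem norm_sub_sum_le_norm_sum_powersetCard :
    ‖y S₀‖ - ∑ A ∈ univ.erase S₀, ‖y A‖ ≤ ‖∑ A ∈ powersetCard #S₀ univ, y A‖ := by
  have hS₀ : S₀ ∈ powersetCard #S₀ univ := mem_powersetCard.2 ⟨subset_univ _, rfl⟩
  rw [← add_sum_erase _ _ hS₀]
  have hrest : ‖∑ A ∈ (powersetCard #S₀ univ).erase S₀, y A‖ ≤ ∑ A ∈ univ.erase S₀, ‖y A‖ :=
    (norm_sum_le _ _).trans (sum_le_sum_of_subset_of_nonneg
      (erase_subset_erase _ (subset_univ _)) fun _ _ _ => norm_nonneg _)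
  linarith [norm_le_add_norm_add (y S₀) (∑ A ∈ (powersetCard #S₀ univ).erase S₀, y A)]

end PowersetCard

theorem exists_pow_esymm_dominant {𝕜 ι : Type*} [NormedField 𝕜] [Fintype ι] (z : ι → 𝕜)
    (hz : ∀ i, ‖z i‖ ≠ 1) {t : ℝ} (ht : 0 ≤ t) :
    ∃ N, 1 ≤ N ∧
      t * ∑ j ∈ (range (Fintype.card ι + 1)).erase #(univ.filter (1 < ‖z ·‖)),
          ‖(univ.val.map (z · ^ N)).esymm j‖ <
        ‖(univ.val.map (z · ^ N)).esymm #(univ.filter (1 < ‖z ·‖))‖ := by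
  classical
  set S₀ := univ.filter (1 < ‖z ·‖)
  have hdom : ∀ A ≠ S₀, ∏ i ∈ A, ‖z i‖ < ∏ i ∈ S₀, ‖z i‖ := fun A hA =>
    prod_lt_prod_filter_one_lt (fun i => norm_nonneg _) hz hA
  have hS₀ : 0 < ∏ i ∈ S₀, ‖z i‖ :=
    one_pos.trans_le (one_le_prod fun i hi => (mem_filter.1 hi).2.le)
  obtain ⟨N, hN, hN1⟩ := ((eventually_mul_sum_pow_lt (univ.erase S₀) hS₀
    (fun A hA => by
      rw [abs_of_nonneg (prod_nonneg fun i _ => norm_nonneg (z i))]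
      exact hdom A (ne_of_mem_erase hA)) (t + 1)).and (eventually_ge_atTop 1)).exists
  refine ⟨N, hN1, ?_⟩
  have hnorm : ∀ A, ‖∏ i ∈ A, z i ^ N‖ = (∏ i ∈ A, ‖z i‖) ^ N := fun A => by
    simp [norm_prod, prod_pow]
  have hrest := sum_norm_sum_powersetCard_le (fun A => ∏ i ∈ A, z i ^ N) S₀ (Fintype.card ι + 1)
  have hmain := norm_sub_sum_le_norm_sum_powersetCard (fun A => ∏ i ∈ A, z i ^ N) S₀
  simp only [hnorm] at hrest hmain
  simp only [esymm_map_val]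
  nlinarith [mul_le_mul_of_nonneg_left hrest ht]

theorem stmt_3_general
    (α : ℂ) (hint : IsIntegral ℤ α)
    (d : ℕ) (hd1 : 0 < d)
    (αs : Fin d → ℂ)
    (hroots : (minpoly ℚ α).map (algebraMap ℚ ℂ) = ∏ i, (X - C (αs i)))
    (hα0 : αs ⟨0, hd1⟩ = α)
    (hmod : ∀ i, ‖αs i‖ ≠ 1)
    (j0 : ℕ) (hj0 : j0 = (Finset.univ.filter fun i => 1 < ‖αs i‖).card) :
    ∀ t : ℝ, 1 ≤ t →
      ∃ N : ℕ, 1 ≤ N ∧ ∃ g : ℕ → ℤ, g 0 = 1 ∧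
        (∏ i, (X - C (αs i ^ N)))
          = ∑ j ∈ Finset.range (d + 1), C ((g j : ℂ)) * X ^ (d - j) ∧
        (((g j0).natAbs : ℝ)
          > t * ∑ j ∈ (Finset.range (d + 1)).erase j0, ((g j).natAbs : ℝ)) ∧
        Polynomial.aeval α
          (∑ j ∈ Finset.range (d + 1), Polynomial.C (g j) * X ^ ((d - j) * N)) = 0 := by
  intro t ht
  have hlifts : ∏ i, (X - C (αs i)) ∈ lifts (algebraMap ℤ ℂ) := (mem_lifts _).2 ⟨minpoly ℤ α, by
    rw [← hroots, minpoly.isIntegrallyClosed_eq_field_fractions' ℚ hint, Polynomial.map_map,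
      ← IsScalarTower.algebraMap_eq]⟩
  obtain ⟨N, hN, hdom⟩ := exists_pow_esymm_dominant αs hmod (zero_le_one.trans ht)
  choose e he using
    Multiset.esymm_map_pow_mem_range (esymm_mem_range_of_prod_X_sub_C_mem_lifts hlifts) N
  set g : ℕ → ℤ := fun j => (-1) ^ j * e j
  have hg : ∀ j, (g j : ℂ) = (-1) ^ j * (univ.val.map (αs · ^ N)).esymm j := fun j => by
    rw [← he]
    simp [g]
  have hP : ∏ i, (X - C (αs i ^ N)) = ∑ j ∈ range (d + 1), C (g j : ℂ) * X ^ (d - j) := by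
    simp only [prod_X_sub_C_eq_sum_esymm, Fintype.card_fin, hg]
  have hg0 : g 0 = 1 := Int.cast_injective (α := ℂ) ((hg 0).trans (by rw [esymm_map_val]; simp))
  refine ⟨N, hN, g, hg0, hP, ?_, ?_⟩
  · have habs : ∀ j, ((g j).natAbs : ℝ) = ‖(univ.val.map (αs · ^ N)).esymm j‖ := fun j => by
      rw [Nat.cast_natAbs, Int.cast_abs, ← Complex.norm_intCast, hg, norm_mul, norm_pow, norm_neg,
        norm_one, one_pow, one_mul]
    simp only [habs]
    subst hj0
    simpa [Fintype.card_fin] using hdom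
  · calc aeval α (∑ j ∈ range (d + 1), C (g j) * X ^ ((d - j) * N))
        = eval (α ^ N) (∑ j ∈ range (d + 1), C (g j : ℂ) * X ^ (d - j)) := by
          simp [eval_finsetSum, pow_mul']
      _ = 0 := by
          rw [← hP, eval_prod]
          exact prod_eq_zero (mem_univ ⟨0, hd1⟩) (by simp [hα0])

/-- For every `t ≥ 1` there is an `N ≥ 1` such that
`P_{α,N}(X) = ∏ (X - α_i^N)` is an integer polynomial whose `j₀`-th
coefficient is `t`-dominant; in particular `Q(X) = P_{α,N}(X^N)` is an
integer polynomial vanishing at `α` with a `t`-dominant coefficient. -/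
theorem stmt_3
    (α : ℂ) (hint : IsIntegral ℤ α) (hα : 1 < ‖α‖)
    (d : ℕ) (hd : d = (minpoly ℚ α).natDegree) (hd1 : 0 < d)
    (αs : Fin d → ℂ)
    (hroots : (minpoly ℚ α).map (algebraMap ℚ ℂ) = ∏ i, (X - C (αs i)))
    (hα0 : αs ⟨0, hd1⟩ = α)
    (hord : ∀ i j : Fin d, i ≤ j → ‖αs j‖ ≤ ‖αs i‖)
    (hmod : ∀ i, ‖αs i‖ ≠ 1)
    (j0 : ℕ) (hj0 : j0 = (Finset.univ.filter fun i => 1 < ‖αs i‖).card) :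
    ∀ t : ℝ, 1 ≤ t →
      ∃ N : ℕ, 1 ≤ N ∧ ∃ g : ℕ → ℤ, g 0 = 1 ∧
        (∏ i, (X - C (αs i ^ N)))
          = ∑ j ∈ Finset.range (d + 1), C ((g j : ℂ)) * X ^ (d - j) ∧
        (((g j0).natAbs : ℝ)
          > t * ∑ j ∈ (Finset.range (d + 1)).erase j0, ((g j).natAbs : ℝ)) ∧
        Polynomial.aeval α
          (∑ j ∈ Finset.range (d + 1), Polynomial.C (g j) * X ^ ((d - j) * N)) = 0 :=
  stmt_3_general α hint d hd1 αs hroots hα0 hmod j0 hj0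
end

section
/- Let j_0 ≥ 1 and d ≥ j_0, and let α_1, …, α_d be complex numbers with |α_1| ≥ |α_2| ≥ ⋯ ≥ |α_{j_0}| > 1 > |α_{j_0+1}| ≥ ⋯ ≥ |α_d|. For 0 ≤ j ≤ d let e_j(x_1,…,x_d) denote the j-th elementary symmetric polynomial (with e_0 = 1). Then lim_{n→∞} e_j(α_1^n, …, α_d^n) / (α_1^n α_2^n ⋯ α_{j_0}^n) = 1 if j = j_0, and = 0 for every j ∈ {0, 1, …, d} with j ≠ j_0. -/
/-!
Normalising by `∏_{i ∈ B} α i ^ n`, where `B` is the set of roots of modulus `> 1`, the term of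
`e_j` indexed by `T` becomes `(∏_T α / ∏_B α) ^ n`. This is `1` for `T = B`, and for `T ≠ B` the
ratio has modulus `< 1`: passing from `B` to `T` drops a factor of modulus `> 1` or adds one of
modulus `< 1`. Only `e_{#B}` contains the term `T = B`.
-/

open Filter Topology Finset

namespace Finset

variable {ι : Type*}

lemma prod_lt_one_of_mem {f : ι → ℝ} {s : Finset ι} (h0 : ∀ i ∈ s, 0 ≤ f i)
    (h1 : ∀ i ∈ s, f i ≤ 1) {i : ι} (hi : i ∈ s) (hlt : f i < 1) : ∏ j ∈ s, f j < 1 := by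
  classical
  rw [← mul_prod_erase s f hi]
  exact mul_lt_one_of_nonneg_of_lt_one_left (h0 i hi) hlt
    (prod_le_one (fun j hj => h0 j (mem_of_mem_erase hj)) fun j hj => h1 j (mem_of_mem_erase hj))

lemma one_lt_prod_of_mem {f : ι → ℝ} {s : Finset ι} (h1 : ∀ i ∈ s, 1 ≤ f i) {i : ι}
    (hi : i ∈ s) (hlt : 1 < f i) : 1 < ∏ j ∈ s, f j := by
  simpa using prod_lt_prod (f := fun _ => (1 : ℝ)) (fun _ _ => one_pos) h1 ⟨i, hi, hlt⟩

lemma prod_lt_prod_of_ne {f : ι → ℝ} {B T : Finset ι} (h0 : ∀ i, 0 ≤ f i)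
    (hbig : ∀ i ∈ B, 1 < f i) (hsmall : ∀ i ∉ B, f i < 1) (hne : T ≠ B) :
    ∏ i ∈ T, f i < ∏ i ∈ B, f i := by
  classical
  have hpos : 0 < ∏ i ∈ T ∩ B, f i :=
    prod_pos fun i hi => one_pos.trans (hbig i (mem_inter.1 hi).2)
  rw [← prod_inter_mul_prod_sdiff T B f, ← prod_inter_mul_prod_sdiff B T f, inter_comm B T]
  refine mul_lt_mul_of_pos_left ?_ hpos
  have hTB : ∀ i ∈ T \ B, f i < 1 := fun i hi => hsmall i (mem_sdiff.1 hi).2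
  have hBT : ∀ i ∈ B \ T, 1 < f i := fun i hi => hbig i (mem_sdiff.1 hi).1
  have hle : ∏ i ∈ T \ B, f i ≤ 1 := prod_le_one (fun i _ => h0 i) fun i hi => (hTB i hi).le
  have hge : 1 ≤ ∏ i ∈ B \ T, f i := one_le_prod fun i hi => (hBT i hi).le
  rcases (T \ B).eq_empty_or_nonempty with hTB_empty | ⟨i, hi⟩
  · obtain ⟨i, hi⟩ : (B \ T).Nonempty := by
      rw [sdiff_eq_empty_iff_subset] at hTB_empty
      exact sdiff_nonempty.2 fun hBsub => hne (hTB_empty.antisymm hBsub)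
    calc ∏ i ∈ T \ B, f i ≤ 1 := hle
      _ < ∏ i ∈ B \ T, f i := one_lt_prod_of_mem (fun i hi => (hBT i hi).le) hi (hBT i hi)
  · calc ∏ i ∈ T \ B, f i < 1 :=
          prod_lt_one_of_mem (fun i _ => h0 i) (fun i hi => (hTB i hi).le) hi (hTB i hi)
      _ ≤ ∏ i ∈ B \ T, f i := hge

end Finset

section DominantRoots

variable {ι 𝕜 : Type*} [NormedField 𝕜] {α : ι → 𝕜} {B : Finset ι}

lemma tendsto_prod_pow_div_prod_pow [DecidableEq ι] (hbig : ∀ i ∈ B, 1 < ‖α i‖)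
    (hsmall : ∀ i ∉ B, ‖α i‖ < 1) (T : Finset ι) :
    Tendsto (fun n : ℕ => (∏ i ∈ T, α i ^ n) / ∏ i ∈ B, α i ^ n) atTop
      (𝓝 (if T = B then 1 else 0)) := by
  simp_rw [prod_pow, ← div_pow]
  have hB : ∏ i ∈ B, α i ≠ 0 :=
    prod_ne_zero_iff.2 fun i hi => norm_pos_iff.1 (one_pos.trans (hbig i hi))
  split_ifs with hT
  · simp [hT, div_self hB]
  · apply tendsto_pow_atTop_nhds_zero_of_norm_lt_one
    rw [norm_div, div_lt_one (norm_pos_iff.2 hB), norm_prod, norm_prod]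
    exact prod_lt_prod_of_ne (fun _ => norm_nonneg _) hbig hsmall hT

lemma tendsto_sum_powersetCard_prod_pow_div [Fintype ι] [DecidableEq ι]
    (hbig : ∀ i ∈ B, 1 < ‖α i‖) (hsmall : ∀ i ∉ B, ‖α i‖ < 1) (j : ℕ) :
    Tendsto (fun n : ℕ =>
        (∑ T ∈ powersetCard j (univ : Finset ι), ∏ i ∈ T, α i ^ n) / ∏ i ∈ B, α i ^ n)
      atTop (𝓝 (if j = #B then 1 else 0)) := by
  simp_rw [sum_div]
  convert tendsto_finsetSum _ fun T _ => tendsto_prod_pow_div_prod_pow hbig hsmall T using 2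
  simp [mem_powersetCard, eq_comm]

end DominantRoots

theorem stmt_4_general
    (d j0 : ℕ) (hj0d : j0 ≤ d)
    (α : Fin d → ℂ)
    (hbig : ∀ i : Fin d, (i : ℕ) < j0 → 1 < ‖α i‖)
    (hsmall : ∀ i : Fin d, j0 ≤ (i : ℕ) → ‖α i‖ < 1) :
    ∀ j, j ≤ d →
      Tendsto
        (fun n : ℕ =>
          (∑ T ∈ Finset.powersetCard j (Finset.univ : Finset (Fin d)),
              ∏ i ∈ T, α i ^ n) /
            ∏ i ∈ Finset.univ.filter (fun i : Fin d => (i : ℕ) < j0), α i ^ n)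
        atTop (nhds (if j = j0 then 1 else 0)) := by
  intro j _
  have hcard : #(univ.filter fun i : Fin d => (i : ℕ) < j0) = j0 := by
    rw [Fin.card_filter_val_lt, min_eq_right hj0d]
  have h := tendsto_sum_powersetCard_prod_pow_div
    (fun i hi => hbig i (mem_filter.1 hi).2)
    (fun i hi => hsmall i (not_lt.1 fun h => hi (mem_filter.2 ⟨mem_univ i, h⟩))) j
  rwa [hcard] at h

/-- Limit of the normalized elementary symmetric functions of the `n`-th
powers: only the `j₀`-th one survives. -/
theorem stmt_4
    (d j0 : ℕ) (hj0 : 1 ≤ j0) (hj0d : j0 ≤ d)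
    (α : Fin d → ℂ)
    (hord : ∀ i k : Fin d, i ≤ k → ‖α k‖ ≤ ‖α i‖)
    (hbig : ∀ i : Fin d, (i : ℕ) < j0 → 1 < ‖α i‖)
    (hsmall : ∀ i : Fin d, j0 ≤ (i : ℕ) → ‖α i‖ < 1) :
    ∀ j, j ≤ d →
      Tendsto
        (fun n : ℕ =>
          (∑ T ∈ Finset.powersetCard j (Finset.univ : Finset (Fin d)),
              ∏ i ∈ T, α i ^ n) /
            ∏ i ∈ Finset.univ.filter (fun i : Fin d => (i : ℕ) < j0), α i ^ n)
        atTop (nhds (if j = j0 then 1 else 0)) :=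
  stmt_4_general d j0 hj0d α hbig hsmall
end

section
/- Let α be an algebraic integer of degree d with |α| > 1 whose Galois conjugates α_1 = α, α_2, …, α_d all satisfy |α_i| ≠ 1, and let j_0 = #{i : |α_i| > 1}. Let N ≥ 1 be an integer such that, writing ∏_{i=1}^d (X − α_i^N) = Σ_{j=0}^d g_j(N) X^{d−j} with g_0(N) = 1, one has |g_{j_0}(N)| > Σ_{j ≠ j_0} |g_j(N)|. Then the integer m := ⌈(|g_{j_0}(N)| − 1)/2⌉ + Σ_{j ≠ j_0} |g_j(N)| satisfies m ≥ ⌈(Δ_N(α)/2 − 1)/2⌉, where Δ_N(α) = |∏_{i=1}^d (1 − α_i^N)| is the N-th Pierce number of α. -/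
open Polynomial

/-! Evaluating `∏ (X - α_i^N) = ∑ g_j X^(d-j)` at `X = 1` gives `∏ (1 - α_i^N) = ∑ g_j`, so
`Δ_N(α) ≤ ∑ |g_j| ≤ |g_{j₀}| + ∑_{j ≠ j₀} |g_j|`. The bound on `m` is then the elementary
inequality `(a + b)/4 - 1/2 ≤ (a - 1)/2 + b` for `a, b ≥ 0`. -/

theorem Finset.sum_le_add_sum_erase {ι M : Type*} [DecidableEq ι] [AddCommMonoid M]
    [PartialOrder M] [IsOrderedAddMonoid M] (s : Finset ι) {f : ι → M} (a : ι) (ha : 0 ≤ f a) :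
    ∑ i ∈ s, f i ≤ f a + ∑ i ∈ s.erase a, f i := by
  by_cases h : a ∈ s
  · rw [Finset.add_sum_erase s f h]
  · rw [Finset.erase_eq_of_notMem h]
    exact le_add_of_nonneg_left ha

theorem norm_prod_one_sub_le_sum_norm {R ι : Type*} [NormedCommRing R] [Fintype ι] (β : ι → R)
    (s : Finset ℕ) (c : ℕ → R) (e : ℕ → ℕ)
    (h : ∏ i, (X - C (β i)) = ∑ j ∈ s, C (c j) * X ^ e j) :
    ‖∏ i, (1 - β i)‖ ≤ ∑ j ∈ s, ‖c j‖ := by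
  have heval : ∏ i, (1 - β i) = ∑ j ∈ s, c j := by
    simpa [eval_prod, eval_finsetSum] using congrArg (eval 1) h
  rw [heval]
  exact norm_sum_le _ _

theorem ceil_quarter_sub_half_le {x : ℝ} {a : ℚ} {b : ℤ} (ha : 0 ≤ a) (hb : 0 ≤ b)
    (hx : x ≤ a + b) : ⌈(x / 2 - 1) / 2⌉ ≤ ⌈(a - 1) / 2⌉ + b := by
  have hceil : ((a : ℝ) - 1) / 2 ≤ (⌈(a - 1) / 2⌉ : ℝ) := by
    exact_mod_cast Int.le_ceil ((a - 1) / 2)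
  have ha' : (0 : ℝ) ≤ a := by exact_mod_cast ha
  have hb' : (0 : ℝ) ≤ b := by exact_mod_cast hb
  rw [Int.ceil_le]
  push_cast
  linarith

theorem stmt_6_general
    (d : ℕ)
    (αs : Fin d → ℂ)
    (j0 : ℕ)
    (N : ℕ)
    (g : ℕ → ℤ)
    (hgdef : (∏ i, (X - C (αs i ^ N)))
      = ∑ j ∈ Finset.range (d + 1), C ((g j : ℂ)) * X ^ (d - j))
    (m : ℤ)
    (hm : m = ⌈((|g j0| : ℚ) - 1) / 2⌉
      + ∑ j ∈ (Finset.range (d + 1)).erase j0, |g j|) :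
    m ≥ ⌈(‖∏ i, (1 - αs i ^ N)‖ / 2 - 1) / 2⌉ := by
  have hΔ : ‖∏ i, (1 - αs i ^ N)‖ ≤ ∑ j ∈ Finset.range (d + 1), ‖(g j : ℂ)‖ :=
    norm_prod_one_sub_le_sum_norm (fun i => αs i ^ N) _ (fun j => (g j : ℂ)) (fun j => d - j) hgdef
  have hsplit : ∑ j ∈ Finset.range (d + 1), |g j|
      ≤ |g j0| + ∑ j ∈ (Finset.range (d + 1)).erase j0, |g j| :=
    Finset.sum_le_add_sum_erase _ j0 (abs_nonneg _)
  rw [hm, ge_iff_le]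
  refine ceil_quarter_sub_half_le (abs_nonneg _)
    (Finset.sum_nonneg fun j _ => abs_nonneg _) ?_
  calc ‖∏ i, (1 - αs i ^ N)‖ ≤ ∑ j ∈ Finset.range (d + 1), (|g j| : ℝ) := by
        simpa only [Complex.norm_intCast] using hΔ
    _ ≤ _ := by push_cast; exact_mod_cast hsplit

/-- Lower bound for the bound `m` of the maximal alphabet in terms of the
`N`-th Pierce number `Δ_N(α) = |∏ (1 - α_i^N)|`. -/
theorem stmt_6
    (α : ℂ) (hint : IsIntegral ℤ α) (hα : 1 < ‖α‖)
    (d : ℕ) (hd : d = (minpoly ℚ α).natDegree) (hd1 : 0 < d)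
    (αs : Fin d → ℂ)
    (hroots : (minpoly ℚ α).map (algebraMap ℚ ℂ) = ∏ i, (X - C (αs i)))
    (hα0 : αs ⟨0, hd1⟩ = α)
    (hmod : ∀ i, ‖αs i‖ ≠ 1)
    (j0 : ℕ) (hj0 : j0 = (Finset.univ.filter fun i => 1 < ‖αs i‖).card)
    (N : ℕ) (hN : 1 ≤ N)
    (g : ℕ → ℤ) (hg0 : g 0 = 1)
    (hgdef : (∏ i, (X - C (αs i ^ N)))
      = ∑ j ∈ Finset.range (d + 1), C ((g j : ℂ)) * X ^ (d - j))
    (hdom : |g j0| > ∑ j ∈ (Finset.range (d + 1)).erase j0, |g j|)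
    (m : ℤ)
    (hm : m = ⌈((|g j0| : ℚ) - 1) / 2⌉
      + ∑ j ∈ (Finset.range (d + 1)).erase j0, |g j|) :
    m ≥ ⌈(‖∏ i, (1 - αs i ^ N)‖ / 2 - 1) / 2⌉ :=
  stmt_6_general d αs j0 N g hgdef m hm
end

section
/- Let γ ∈ ℂ with |γ| > 1, let (a_k)_{k≥0} be an eventually periodic sequence of integers (there exist N ≥ 0 and p ≥ 1 with a_{k+p} = a_k for all k ≥ N), and set x = Σ_{k=0}^∞ a_k γ^{−k}. Let σ : ℂ → ℂ be a ring homomorphism such that |σ(γ)| > 1. Then σ(x) = Σ_{k=0}^∞ a_k σ(γ)^{−k}, both series being absolutely convergent. -/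
/-! An eventually periodic sequence takes only finitely many values, so both series are dominated
by geometric series. Splitting off the first `N` terms and summing the periodic tail as a geometric
series in `w ^ p` gives the closed form
`∑_{k<N} a_k w^k + (∑_{j<p} a_{N+j} w^{N+j}) (1 - w^p)⁻¹`, a rational expression in `w` with
integer coefficients; a ring homomorphism transports it, continuous or not. -/

section EventuallyPeriodic

variable {α : Type*} {a : ℕ → α} {N p : ℕ}

theorem exists_lt_add_eq_of_eventually_periodic (hp : 0 < p)
    (hper : ∀ k, N ≤ k → a (k + p) = a k) (k : ℕ) : ∃ j < N + p, a j = a k := by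
  by_cases hk : k < N
  · exact ⟨k, by omega, rfl⟩
  have hperiodic : Function.Periodic (fun m => a (N + m)) p := fun m => by
    simpa only [add_assoc] using hper (N + m) (Nat.le_add_right N m)
  refine ⟨N + (k - N) % p, by have := Nat.mod_lt (k - N) hp; omega, ?_⟩
  simpa only [Nat.add_sub_cancel' (not_lt.1 hk)] using hperiodic.map_mod_nat (k - N)

theorem finite_range_of_eventually_periodic (hp : 0 < p)
    (hper : ∀ k, N ≤ k → a (k + p) = a k) : (Set.range a).Finite := by
  refine ((Set.finite_Iio (N + p)).image a).subset ?_
  rintro _ ⟨k, rfl⟩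
  exact exists_lt_add_eq_of_eventually_periodic hp hper k

end EventuallyPeriodic

section PowerSeries

variable {K : Type*} [NormedField K] {c : ℕ → K} {w : K} {N p : ℕ}

theorem summable_norm_mul_pow_of_bounded {C : ℝ} (hc : ∀ k, ‖c k‖ ≤ C) (hw : ‖w‖ < 1) :
    Summable fun k => ‖c k * w ^ k‖ := by
  refine .of_nonneg_of_le (fun k => norm_nonneg _) (fun k => ?_)
    ((summable_geometric_of_lt_one (norm_nonneg w) hw).mul_left C)
  rw [norm_mul, norm_pow]
  exact mul_le_mul_of_nonneg_right (hc k) (by positivity)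

theorem summable_norm_mul_pow_of_eventually_periodic (hp : 0 < p)
    (hper : ∀ k, N ≤ k → c (k + p) = c k) (hw : ‖w‖ < 1) :
    Summable fun k => ‖c k * w ^ k‖ := by
  obtain ⟨C, hC⟩ := (finite_range_of_eventually_periodic (a := fun k => ‖c k‖) hp
    fun k hk => by rw [hper k hk]).bddAbove
  exact summable_norm_mul_pow_of_bounded (fun k => hC ⟨k, rfl⟩) hw

theorem tsum_mul_pow_of_eventually_periodic [CompleteSpace K] (hp : 0 < p)
    (hper : ∀ k, N ≤ k → c (k + p) = c k) (hw : ‖w‖ < 1) :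
    ∑' k, c k * w ^ k = ∑ k ∈ Finset.range N, c k * w ^ k +
      (∑ j ∈ Finset.range p, c (N + j) * w ^ (N + j)) * (1 - w ^ p)⁻¹ := by
  set f : ℕ → K := fun k => c k * w ^ k
  have hf : Summable f := (summable_norm_mul_pow_of_eventually_periodic hp hper hw).of_norm
  set T := ∑' j, f (j + N)
  have hshift (j : ℕ) : f (j + p + N) = w ^ p * f (j + N) := by
    simp only [f, add_right_comm j p N, hper (j + N) (Nat.le_add_left N j), pow_add]
    ring
  have hT : ∑ j ∈ Finset.range p, f (j + N) + w ^ p * T = T := by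
    simpa only [hshift, tsum_mul_left] using
      ((summable_nat_add_iff N).2 hf).sum_add_tsum_nat_add p
  have hne : 1 - w ^ p ≠ 0 := sub_ne_zero.2 fun h => by
    have := pow_lt_one₀ (norm_nonneg w) hw hp.ne'
    rw [← norm_pow, ← h, norm_one] at this
    exact this.false
  have hS : ∑ j ∈ Finset.range p, c (N + j) * w ^ (N + j) = ∑ j ∈ Finset.range p, f (j + N) := by
    simp only [f, add_comm N]
  rw [← hf.sum_add_tsum_nat_add N, hS]
  congr 1
  rw [eq_mul_inv_iff_mul_eq₀ hne]
  linear_combination -hT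

theorem map_tsum_intCast_mul_pow_of_eventually_periodic {L : Type*} [NormedField L]
    [CompleteSpace K] [CompleteSpace L] (f : K →+* L) {a : ℕ → ℤ} (hp : 0 < p)
    (hper : ∀ k, N ≤ k → a (k + p) = a k) (hw : ‖w‖ < 1) (hfw : ‖f w‖ < 1) :
    f (∑' k, (a k : K) * w ^ k) = ∑' k, (a k : L) * f w ^ k := by
  rw [tsum_mul_pow_of_eventually_periodic hp (fun k hk => by rw [hper k hk]) hw,
    tsum_mul_pow_of_eventually_periodic hp (fun k hk => by rw [hper k hk]) hfw]
  simp only [map_add, map_mul, map_sum, map_intCast, map_inv₀, map_pow, map_sub, map_one]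

end PowerSeries

/-- An eventually periodic expansion in a base `γ` of modulus `> 1` can be
conjugated term by term under any ring homomorphism `σ : ℂ → ℂ` with
`|σ(γ)| > 1`; both series are absolutely convergent. -/
theorem stmt_7
    (γ : ℂ) (hγ : 1 < ‖γ‖)
    (a : ℕ → ℤ)
    (hper : ∃ N p : ℕ, 1 ≤ p ∧ ∀ k, N ≤ k → a (k + p) = a k)
    (x : ℂ) (hx : x = ∑' k : ℕ, (a k : ℂ) * γ⁻¹ ^ k)
    (σ : ℂ →+* ℂ) (hσ : 1 < ‖σ γ‖) :
    Summable (fun k : ℕ => ‖(a k : ℂ) * γ⁻¹ ^ k‖) ∧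
    Summable (fun k : ℕ => ‖(a k : ℂ) * (σ γ)⁻¹ ^ k‖) ∧
    σ x = ∑' k : ℕ, (a k : ℂ) * (σ γ)⁻¹ ^ k := by
  obtain ⟨N, p, hp, hper⟩ := hper
  have hcast : ∀ k, N ≤ k → (a (k + p) : ℂ) = a k := fun k hk => by rw [hper k hk]
  have hγinv : ‖γ⁻¹‖ < 1 := norm_inv γ ▸ inv_lt_one_of_one_lt₀ hγ
  have hσγinv : ‖(σ γ)⁻¹‖ < 1 := norm_inv (σ γ) ▸ inv_lt_one_of_one_lt₀ hσ
  refine ⟨summable_norm_mul_pow_of_eventually_periodic hp hcast hγinv,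
    summable_norm_mul_pow_of_eventually_periodic hp hcast hσγinv, ?_⟩
  rw [hx, map_tsum_intCast_mul_pow_of_eventually_periodic σ hp hper hγinv
    (by rwa [map_inv₀]), map_inv₀]
end

section
/- Let β > 1 be a real number and let T_β : [0,1) → [0,1) be the β-transformation T_β(x) = βx − ⌊βx⌋. If every rational number in [0,1) has a finite forward orbit under T_β (equivalently, an eventually periodic β-expansion), then β is either a Pisot number or a Salem number. -/
/-!
The orbit of `x` under `T_β` is `T_β^n x = β^n x - ∑_{k<n} d_k β^(n-1-k)` with digits
`0 ≤ d_k < β`, so a repetition `T_β^m x = T_β^(m') x` is a polynomial relation for `β`; for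
`x = 1/2` it becomes monic with integer coefficients after doubling, hence `β` is an algebraic
integer.

Let `z` be a conjugate of `β` with `|z| > 1`. Transporting the relations to `z`, the values
`ρ_n = z^n x - ∑_{k<n} d_k z^(n-1-k)` depend only on `T_β^n x`, so they are finitely many, and
`ρ_n = (ρ_(n+1) + d_n) / z` forces `|ρ_n| ≤ β / (|z| - 1)`. A rational `x` just above `1/β` has
digits `1, 0, …, 0` (`n` zeros), so `ρ_(n+1) = z^n (x z - 1)` and `|x - 1/z| = O(|z|^-n)`, while
`|x - 1/β| < β^-(n+1)`. Letting `n → ∞` gives `z = β`.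
-/

open Polynomial Set

noncomputable def betaMap (β x : ℝ) : ℝ := Int.fract (β * x)

noncomputable def betaDigit (β x : ℝ) (k : ℕ) : ℤ := ⌊β * (betaMap β)^[k] x⌋

/-- `digitPoly a d n = a X^n - ∑_{k<n} d k X^(n-1-k)`. -/
noncomputable def digitPoly {R : Type*} [CommRing R] (a : R) (d : ℕ → R) : ℕ → R[X]
  | 0 => C a
  | n + 1 => X * digitPoly a d n - C (d n)

section digitPoly

variable {R : Type*} [CommRing R] (a : R) (d : ℕ → R)

@[simp] lemma digitPoly_zero : digitPoly a d 0 = C a := rfl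

@[simp] lemma digitPoly_succ (n : ℕ) :
    digitPoly a d (n + 1) = X * digitPoly a d n - C (d n) := rfl

lemma monic_digitPoly_one [Nontrivial R] (n : ℕ) :
    (digitPoly 1 d n).Monic ∧ (digitPoly 1 d n).degree = n := by
  induction n with
  | zero => simp
  | succ n ih =>
    have hdeg : (X * digitPoly 1 d n).degree = ((n + 1 : ℕ) : WithBot ℕ) := by
      rw [mul_comm, degree_mul_X, ih.2]; rfl
    have hC : (C (d n)).degree < (X * digitPoly 1 d n).degree :=
      hdeg ▸ degree_C_le.trans_lt (by exact_mod_cast n.succ_pos)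
    exact ⟨(monic_X.mul ih.1).sub_of_left hC,
      by rw [digitPoly_succ, degree_sub_eq_left_of_degree_lt hC, hdeg]⟩

lemma digitPoly_of_digits_one_zero {n : ℕ} (h0 : d 0 = 1)
    (hd : ∀ k, 1 ≤ k → k ≤ n → d k = 0) :
    digitPoly a d (n + 1) = X ^ n * (C a * X - 1) := by
  induction n with
  | zero =>
    simp only [digitPoly_succ, digitPoly_zero, h0, map_one, pow_zero]
    ring
  | succ n ih =>
    rw [digitPoly_succ, ih fun k h1 h2 => hd k h1 (by omega), hd (n + 1) (by omega) le_rfl]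
    simp only [map_zero, sub_zero]
    ring

end digitPoly

section betaMap

variable {β : ℝ}

lemma betaMap_iterate_succ (x : ℝ) (n : ℕ) :
    (betaMap β)^[n + 1] x = β * (betaMap β)^[n] x - betaDigit β x n := by
  rw [Function.iterate_succ_apply']; rfl

lemma betaMap_iterate_mem_Ico {x : ℝ} (hx : x ∈ Ico 0 1) (n : ℕ) :
    (betaMap β)^[n] x ∈ Ico 0 1 := by
  cases n with
  | zero => exact hx
  | succ n =>
    rw [Function.iterate_succ_apply']
    exact ⟨Int.fract_nonneg _, Int.fract_lt_one _⟩

lemma betaDigit_nonneg (hβ : 0 ≤ β) {x : ℝ} (hx : x ∈ Ico 0 1) (k : ℕ) :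
    0 ≤ betaDigit β x k :=
  Int.floor_nonneg.mpr (mul_nonneg hβ (betaMap_iterate_mem_Ico hx k).1)

lemma betaDigit_lt (hβ : 0 < β) {x : ℝ} (hx : x ∈ Ico 0 1) (k : ℕ) :
    (betaDigit β x k : ℝ) < β :=
  (Int.floor_le _).trans_lt (mul_lt_of_lt_one_right hβ (betaMap_iterate_mem_Ico hx k).2)

lemma aeval_digitPoly_eq_iterate {R : Type*} [CommRing R] [Algebra R ℝ] {x c : ℝ} {a : R}
    {d : ℕ → R} (ha : algebraMap R ℝ a = c * x)
    (hd : ∀ k, algebraMap R ℝ (d k) = c * betaDigit β x k) (n : ℕ) :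
    aeval β (digitPoly a d n) = c * (betaMap β)^[n] x := by
  induction n with
  | zero => simpa using ha
  | succ n ih =>
    rw [digitPoly_succ, map_sub, map_mul, aeval_X, ih, aeval_C, hd, betaMap_iterate_succ]
    ring

lemma isIntegral_of_finite_orbit {x : ℝ} {N : ℤ} (hx : N * x = 1)
    (hfin : (range fun n => (betaMap β)^[n] x).Finite) : IsIntegral ℤ β := by
  obtain ⟨m, m', hlt, heq⟩ := hfin.exists_lt_map_eq_of_forall_mem fun n => mem_range_self n
  set p := digitPoly (1 : ℤ) fun k => N * betaDigit β x k
  have hev (n : ℕ) : aeval β (p n) = N * (betaMap β)^[n] x :=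
    aeval_digitPoly_eq_iterate (by simp [hx]) (by simp) n
  obtain ⟨hmon, hdeg⟩ := monic_digitPoly_one (fun k => N * betaDigit β x k) m'
  refine ⟨p m' - p m, hmon.sub_of_left ?_, ?_⟩
  · rw [(monic_digitPoly_one _ m).2, hdeg]
    exact_mod_cast hlt
  · rw [← aeval_def, map_sub, hev, hev, heq, sub_self]

lemma betaDigit_of_near_inv (hβ : 1 < β) {x : ℝ} {n : ℕ} (hx : β⁻¹ ≤ x)
    (hxn : β ^ (n + 1) * (x - β⁻¹) < 1) :
    betaDigit β x 0 = 1 ∧ ∀ k, 1 ≤ k → k ≤ n → betaDigit β x k = 0 := by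
  set ε := x - β⁻¹
  have hε : 0 ≤ ε := sub_nonneg.2 hx
  have hsmall (j : ℕ) (hj : j ≤ n + 1) : β ^ j * ε < 1 :=
    (mul_le_mul_of_nonneg_right (pow_le_pow_right₀ hβ.le hj) hε).trans_lt hxn
  have hβx : β * x = 1 + β ^ 1 * ε := by
    simp only [ε, pow_one, mul_sub, mul_inv_cancel₀ (by positivity : β ≠ 0)]
    ring
  have hiter (k : ℕ) (hk : k ≤ n) : (betaMap β)^[k + 1] x = β ^ (k + 1) * ε := by
    induction k with
    | zero =>
      rw [Function.iterate_one, betaMap, hβx, Int.fract_one_add, Int.fract_eq_self]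
      exact ⟨by positivity, hsmall 1 (by omega)⟩
    | succ k ih =>
      rw [Function.iterate_succ_apply', ih (by omega), betaMap, ← mul_assoc, ← pow_succ',
        Int.fract_eq_self]
      exact ⟨by positivity, hsmall (k + 2) (by omega)⟩
  refine ⟨?_, fun k hk1 hkn => ?_⟩
  · rw [betaDigit, Function.iterate_zero_apply, hβx, Int.floor_eq_iff]
    have := hsmall 1 (by omega)
    push_cast
    constructor <;> linarith [show 0 ≤ β ^ 1 * ε by positivity]
  · obtain ⟨k, rfl⟩ := Nat.exists_eq_add_of_le' hk1
    rw [betaDigit, hiter k (by omega), ← mul_assoc, ← pow_succ', Int.floor_eq_zero_iff]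
    exact ⟨by positivity, hsmall (k + 2) (by omega)⟩

end betaMap

lemma aeval_eq_of_aeval_minpoly_eq_zero {K A B : Type*} [Field K] [CommRing A] [Algebra K A]
    [CommRing B] [Algebra K B] {β : A} {z : B} (hz : aeval z (minpoly K β) = 0) {p p' : K[X]}
    (h : aeval β p = aeval β p') : aeval z p = aeval z p' := by
  rw [← sub_eq_zero, ← map_sub] at h ⊢
  exact aeval_eq_zero_of_dvd_aeval_eq_zero (minpoly.dvd K β h) hz

lemma le_div_sub_one_of_mul_le_add {u : ℕ → ℝ} {a c : ℝ} (ha : 1 < a)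
    (hu : BddAbove (range u)) (h : ∀ j, a * u j ≤ u (j + 1) + c) (j : ℕ) :
    u j ≤ c / (a - 1) := by
  set S := ⨆ i, u i
  have hle (i : ℕ) : u i ≤ S := le_ciSup hu i
  have hS : a * S ≤ S + c := by
    rw [← le_div_iff₀' (by linarith)]
    exact ciSup_le fun i =>
      (le_div_iff₀' (by linarith)).2 ((h i).trans (by linarith [hle (i + 1)]))
  rw [le_div_iff₀ (by linarith)]
  nlinarith [hle j]

section conjugate

variable {β : ℝ} {z : ℂ}

lemma norm_aeval_digitPoly_le (hβ : 0 < β) (hz : aeval z (minpoly ℚ β) = 0) (hz1 : 1 < ‖z‖)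
    {q : ℚ} (hq : (q : ℝ) ∈ Ico 0 1) (hfin : (range fun n => (betaMap β)^[n] q).Finite)
    (j : ℕ) : ‖aeval z (digitPoly q (fun k => (betaDigit β q k : ℚ)) j)‖ ≤ β / (‖z‖ - 1) := by
  set P := digitPoly q fun k => (betaDigit β q k : ℚ)
  set ρ := fun j => aeval z (P j)
  have hβP (n : ℕ) : aeval β (P n) = (betaMap β)^[n] q := by
    simpa using aeval_digitPoly_eq_iterate (β := β) (x := q) (c := 1) (by simp) (by simp) n
  have hfactor : ρ.FactorsThrough fun n => (betaMap β)^[n] q := fun i j h =>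
    aeval_eq_of_aeval_minpoly_eq_zero hz <| by rw [hβP, hβP]; exact h
  have hρfin : (range ρ).Finite := by
    refine (hfin.image (Function.extend (fun n => (betaMap β)^[n] q) ρ 0)).subset ?_
    rintro _ ⟨j, rfl⟩
    exact ⟨_, mem_range_self j, hfactor.extend_apply 0 j⟩
  have hbdd : BddAbove (range fun j => ‖ρ j‖) := by
    rw [range_comp' norm ρ]
    exact (hρfin.image _).bddAbove
  refine le_div_sub_one_of_mul_le_add hz1 hbdd (fun j => ?_) j
  have hdigit : ‖((betaDigit β q j : ℚ) : ℂ)‖ ≤ β := by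
    rw [Rat.cast_intCast, ← Complex.ofReal_intCast, Complex.norm_real, Real.norm_eq_abs,
      abs_of_nonneg (by exact_mod_cast betaDigit_nonneg hβ.le hq j)]
    exact (betaDigit_lt hβ hq j).le
  have hrec : z * ρ j = ρ (j + 1) + ((betaDigit β q j : ℚ) : ℂ) := by
    simp [ρ, P]
  rw [← norm_mul, hrec]
  exact (norm_add_le _ _).trans (by linarith)

lemma norm_inv_sub_inv_le (hβ : 1 < β)
    (hfin : ∀ q : ℚ, (q : ℝ) ∈ Ico 0 1 → (range fun n => (betaMap β)^[n] q).Finite)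
    (hz : aeval z (minpoly ℚ β) = 0) (hz1 : 1 < ‖z‖) (n : ℕ) :
    ‖(β : ℂ)⁻¹ - z⁻¹‖ ≤ β⁻¹ ^ (n + 1) + β / (‖z‖ - 1) * ‖z‖⁻¹ ^ (n + 1) := by
  have hβ0 : 0 < β := by linarith
  obtain ⟨q, hq1, hq2⟩ := exists_rat_btwn (lt_min
    (lt_add_of_pos_right β⁻¹ (pow_pos (inv_pos.2 hβ0) (n + 1))) (inv_lt_one_of_one_lt₀ hβ))
  have hqI : (q : ℝ) ∈ Ico 0 1 :=
    ⟨(inv_pos.2 hβ0).le.trans hq1.le, hq2.trans_le (min_le_right _ _)⟩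
  have hqβ : (q : ℝ) - β⁻¹ < β⁻¹ ^ (n + 1) := by linarith [min_le_left (β⁻¹ + β⁻¹ ^ (n + 1)) 1]
  obtain ⟨hd0, hdk⟩ := betaDigit_of_near_inv hβ hq1.le (n := n) <| by
    calc β ^ (n + 1) * (q - β⁻¹) < β ^ (n + 1) * β⁻¹ ^ (n + 1) := by gcongr
      _ = 1 := by rw [← mul_pow, mul_inv_cancel₀ hβ0.ne', one_pow]
  have hρ := norm_aeval_digitPoly_le hβ0 hz hz1 hqI (hfin q hqI) (n + 1)
  rw [digitPoly_of_digits_one_zero _ _ (by simp [hd0])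
    fun k h1 h2 => by simp [hdk k h1 h2]] at hρ
  have hz0 : z ≠ 0 := norm_pos_iff.1 (by linarith)
  have hqz : (q : ℂ) - z⁻¹ = z⁻¹ ^ (n + 1) * aeval z (X ^ n * (C q * X - 1)) := by
    simp only [map_mul, map_pow, map_sub, aeval_X, aeval_C, map_one, eq_ratCast]
    rw [inv_pow, eq_inv_mul_iff_mul_eq₀ (pow_ne_zero _ hz0)]
    field_simp
    ring
  calc ‖(β : ℂ)⁻¹ - z⁻¹‖ ≤ ‖(β : ℂ)⁻¹ - q‖ + ‖(q : ℂ) - z⁻¹‖ :=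
        norm_sub_le_norm_sub_add_norm_sub ..
    _ ≤ β⁻¹ ^ (n + 1) + β / (‖z‖ - 1) * ‖z‖⁻¹ ^ (n + 1) := by
      gcongr
      · rw [norm_sub_rev, show (q : ℂ) - (β : ℂ)⁻¹ = ((q - β⁻¹ : ℝ) : ℂ) by push_cast; rfl,
          Complex.norm_real, Real.norm_eq_abs, abs_of_nonneg (by linarith)]
        exact hqβ.le
      · rw [hqz, norm_mul, norm_pow, norm_inv, mul_comm]
        gcongr

lemma eq_of_aeval_minpoly_eq_zero_of_one_lt_norm (hβ : 1 < β)
    (hfin : ∀ q : ℚ, (q : ℝ) ∈ Ico 0 1 → (range fun n => (betaMap β)^[n] q).Finite)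
    (hz : aeval z (minpoly ℚ β) = 0) (hz1 : 1 < ‖z‖) : z = β := by
  have hlim : Filter.Tendsto (fun n => β⁻¹ ^ (n + 1) + β / (‖z‖ - 1) * ‖z‖⁻¹ ^ (n + 1))
      Filter.atTop (nhds 0) := by
    have hpow {r : ℝ} (h0 : 0 ≤ r) (h1 : r < 1) :=
      (tendsto_pow_atTop_nhds_zero_of_lt_one h0 h1).comp (Filter.tendsto_add_atTop_nat 1)
    simpa using (hpow (by positivity) (inv_lt_one_of_one_lt₀ hβ)).add
      ((hpow (by positivity) (inv_lt_one_of_one_lt₀ hz1)).const_mul (β / (‖z‖ - 1)))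
  have h0 := ge_of_tendsto' hlim (norm_inv_sub_inv_le hβ hfin hz hz1)
  exact (inv_injective (sub_eq_zero.1 (norm_le_zero_iff.1 h0))).symm

end conjugate

/-- Schmidt's theorem, part (1): if every rational in `[0,1)` has a finite
forward orbit under the `β`-transformation, then `β` is a Pisot number or a
Salem number. -/
theorem stmt_10
    (β : ℝ) (hβ : 1 < β)
    (T : ℝ → ℝ) (hT : ∀ x, T x = β * x - ⌊β * x⌋)
    (hfin : ∀ q : ℚ, (q : ℝ) ∈ Set.Ico (0 : ℝ) 1 →
      {y : ℝ | ∃ n : ℕ, T^[n] (q : ℝ) = y}.Finite) :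
    (IsIntegral ℤ β ∧
      ∀ z : ℂ, Polynomial.aeval z (minpoly ℚ β) = 0 → z ≠ (β : ℂ) → ‖z‖ < 1) ∨
    (IsIntegral ℤ β ∧
      (∀ z : ℂ, Polynomial.aeval z (minpoly ℚ β) = 0 → z ≠ (β : ℂ) → ‖z‖ ≤ 1) ∧
      ∃ z : ℂ, Polynomial.aeval z (minpoly ℚ β) = 0 ∧ ‖z‖ = 1) := by
  obtain rfl : T = betaMap β := funext hT
  have hint : IsIntegral ℤ β :=
    isIntegral_of_finite_orbit (x := ((1 / 2 : ℚ) : ℝ)) (N := 2) (by norm_num)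
      (hfin _ (by norm_num))
  have hle (z : ℂ) (hz : aeval z (minpoly ℚ β) = 0) (hne : z ≠ β) : ‖z‖ ≤ 1 :=
    not_lt.1 fun h => hne (eq_of_aeval_minpoly_eq_zero_of_one_lt_norm hβ hfin hz h)
  by_cases hunit : ∃ z : ℂ, aeval z (minpoly ℚ β) = 0 ∧ ‖z‖ = 1
  · exact Or.inr ⟨hint, hle, hunit⟩
  · simp only [not_exists, not_and] at hunit
    exact Or.inl ⟨hint, fun z hz hne => (hle z hz hne).lt_of_ne (hunit z hz)⟩
end

section
/- Let β be a Pisot number and let T_β : [0,1) → [0,1) be the β-transformation T_β(x) = βx − ⌊βx⌋. Then a real number x ∈ [0,1) has a finite forward orbit under T_β (equivalently, an eventually periodic β-expansion) if and only if x ∈ ℚ(β). -/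
/-!
Write `y n := T^[n] x`, so that `y (n + 1) = β * y n - a n` with integers `a n`. Iterating,
`y n = β ^ n * x - c n` with `c n ∈ ℚ(β)`, so a repetition `y m = y n` with `m ≠ n` solves
for `x` in `ℚ(β)`.

Conversely, if `x ∈ ℚ(β)`, pick `q ≠ 0` with `q x` an algebraic integer; then all `q y n` are
algebraic integers of `ℚ(β)`. Under an embedding `φ : ℚ(β) → ℂ` sending `β` to a conjugate
`z ≠ β`, the recurrence becomes `φ (q y (n + 1)) = z φ (q y n) - q a n` with `|z| < 1` and
`a n` bounded, so `φ (q y n)` stays bounded; under the embedding sending `β` to itself,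
`q y n` is bounded because `y n ∈ [0, 1)` for `n ≥ 1`. A number field has only finitely many
algebraic integers all of whose conjugates are bounded, so the orbit is finite.
-/

open IntermediateField Polynomial

section Recurrence

variable {F : Type*} [Field F] {β : F} {a : ℕ → ℤ} {y : ℕ → F}

theorem exists_mem_closure_eq_pow_mul_sub (hy : ∀ n, y (n + 1) = β * y n - a n) (n : ℕ) :
    ∃ c ∈ Subfield.closure {β}, y n = β ^ n * y 0 - c := by
  induction n with
  | zero => exact ⟨0, zero_mem _, by simp⟩
  | succ n ih =>
    obtain ⟨c, hc, hyn⟩ := ih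
    refine ⟨β * c + a n,
      add_mem (mul_mem (Subfield.subset_closure rfl) hc) (intCast_mem _ _), ?_⟩
    rw [hy, hyn]
    ring

theorem mem_closure_of_finite_range (hβ : Function.Injective (β ^ · : ℕ → F))
    (hy : ∀ n, y (n + 1) = β * y n - a n) (hfin : (Set.range y).Finite) :
    y 0 ∈ Subfield.closure {β} := by
  obtain ⟨m, n, hmn, hyeq⟩ : ∃ m n, m ≠ n ∧ y m = y n := by
    by_contra! h
    exact Set.infinite_range_of_injective (fun m n => not_imp_not.1 (h m n)) hfin
  obtain ⟨cm, hcm, hym⟩ := exists_mem_closure_eq_pow_mul_sub hy m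
  obtain ⟨cn, hcn, hyn⟩ := exists_mem_closure_eq_pow_mul_sub hy n
  have hne : β ^ m - β ^ n ≠ 0 := sub_ne_zero.2 (hβ.ne hmn)
  have hβmem : β ∈ Subfield.closure {β} := Subfield.subset_closure rfl
  rw [show y 0 = (cm - cn) / (β ^ m - β ^ n) by
    rw [eq_div_iff hne]; linear_combination hyeq - hym + hyn]
  exact div_mem (sub_mem hcm hcn) (sub_mem (pow_mem hβmem m) (pow_mem hβmem n))

end Recurrence

theorem le_max_div_one_sub_of_le_mul_add {s : ℕ → ℝ} {ρ M : ℝ} (hρ₀ : 0 ≤ ρ) (hρ₁ : ρ < 1)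
    (hs : ∀ n, s (n + 1) ≤ ρ * s n + M) (n : ℕ) : s n ≤ max (s 0) (M / (1 - ρ)) := by
  set B := max (s 0) (M / (1 - ρ))
  have hM : M ≤ (1 - ρ) * B := by
    have := le_max_right (s 0) (M / (1 - ρ))
    rwa [div_le_iff₀ (by linarith), mul_comm] at this
  induction n with
  | zero => exact le_max_left _ _
  | succ n ih => nlinarith [hs n, mul_le_mul_of_nonneg_left ih hρ₀]

namespace NumberField

variable {K : Type*} [Field K] [NumberField K] {b : K} {u : ℕ → K} {a : ℕ → ℤ} {M : ℝ}

theorem norm_apply_le_of_norm_lt_one (hu : ∀ n, u (n + 1) = b * u n - a n)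
    (ha : ∀ n, |(a n : ℝ)| ≤ M) (φ : K →+* ℂ) (hφ : ‖φ b‖ < 1) (n : ℕ) :
    ‖φ (u n)‖ ≤ max ‖φ (u 0)‖ (M / (1 - ‖φ b‖)) := by
  refine le_max_div_one_sub_of_le_mul_add (s := fun n => ‖φ (u n)‖) (norm_nonneg _) hφ
    (fun n => ?_) n
  calc ‖φ (u (n + 1))‖ = ‖φ b * φ (u n) - a n‖ := by rw [hu, map_sub, map_mul, map_intCast]
    _ ≤ ‖φ b‖ * ‖φ (u n)‖ + |(a n : ℝ)| := by
      grw [norm_sub_le, norm_mul, Complex.norm_intCast]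
    _ ≤ ‖φ b‖ * ‖φ (u n)‖ + M := by grw [ha n]

theorem finite_range_of_isIntegral (hb : IsIntegral ℤ b) (hu : ∀ n, u (n + 1) = b * u n - a n)
    (hu₀ : IsIntegral ℤ (u 0)) (ha : ∀ n, |(a n : ℝ)| ≤ M)
    (hφ : ∀ φ : K →+* ℂ, ‖φ b‖ < 1 ∨ ∃ B, ∀ n, ‖φ (u n)‖ ≤ B) :
    (Set.range u).Finite := by
  have hint : ∀ n, IsIntegral ℤ (u n) := by
    intro n
    induction n with
    | zero => exact hu₀
    | succ n ih => rw [hu]; exact (hb.mul ih).sub isIntegral_algebraMap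
  have hbound : ∀ φ : K →+* ℂ, ∃ B, ∀ n, ‖φ (u n)‖ ≤ B := fun φ =>
    (hφ φ).elim (fun h => ⟨_, norm_apply_le_of_norm_lt_one hu ha φ h⟩) id
  choose B hB using hbound
  obtain ⟨R, hR⟩ := (Set.finite_range B).bddAbove
  refine (Embeddings.finite_of_norm_le K ℂ R).subset ?_
  rintro _ ⟨n, rfl⟩
  exact ⟨hint n, fun φ => (hB φ n).trans (hR ⟨φ, rfl⟩)⟩

theorem finite_range_of_recurrence (hb : IsIntegral ℤ b) (hu : ∀ n, u (n + 1) = b * u n - a n)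
    (ha : ∀ n, |(a n : ℝ)| ≤ M)
    (hφ : ∀ φ : K →+* ℂ, ‖φ b‖ < 1 ∨ ∃ B, ∀ n, ‖φ (u n)‖ ≤ B) :
    (Set.range u).Finite := by
  obtain ⟨q, hq, hqu⟩ := IsAlgebraic.exists_integral_multiple
    ((IsFractionRing.isAlgebraic_iff ℤ ℚ K).2 (Algebra.IsAlgebraic.isAlgebraic (u 0)))
  have hv : (Set.range ((q • ·) ∘ u)).Finite := by
    refine finite_range_of_isIntegral (a := fun n => q * a n) (M := |q| * M) hb
      (fun n => by simp only [Function.comp, hu]; push_cast; rw [zsmul_eq_mul, zsmul_eq_mul]; ring)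
      hqu (fun n => by push_cast; rw [abs_mul]; gcongr; exact ha n) (fun φ => ?_)
    refine (hφ φ).imp id fun ⟨B, hB⟩ => ⟨|q| * B, fun n => ?_⟩
    simp only [Function.comp, zsmul_eq_mul, map_mul, map_intCast, norm_mul, Complex.norm_intCast,
      Int.cast_abs]
    gcongr
    exact hB n
  rw [Set.range_comp] at hv
  exact hv.of_finite_image (smul_right_injective K hq).injOn

end NumberField

namespace IntermediateField

variable {E A : Type*} [Field E] [CharZero E] [DivisionRing A] [CharZero A] {α : E}

theorem ringHom_ext_adjoin_simple {φ ψ : ℚ⟮α⟯ →+* A}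
    (h : φ (AdjoinSimple.gen ℚ α) = ψ (AdjoinSimple.gen ℚ α)) : φ = ψ := by
  have : φ.toRatAlgHom = ψ.toRatAlgHom :=
    adjoin_algHom_ext ℚ fun x hx => by obtain rfl := Set.mem_singleton_iff.1 hx; exact h
  exact RingHom.ext fun x => DFunLike.congr_fun this x

theorem aeval_ringHom_gen_minpoly (φ : ℚ⟮α⟯ →+* A) :
    aeval (φ (AdjoinSimple.gen ℚ α)) (minpoly ℚ α) = 0 := by
  rw [← minpoly_gen]
  exact minpoly.aeval_algHom ℚ φ.toRatAlgHom _

end IntermediateField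

theorem finite_range_of_pisot {β : ℝ} (hβint : IsIntegral ℤ β)
    (hpisot : ∀ z : ℂ, aeval z (minpoly ℚ β) = 0 → z ≠ (β : ℂ) → ‖z‖ < 1)
    {a : ℕ → ℤ} {y : ℕ → ℝ} {R : ℝ} (hy : ∀ n, y (n + 1) = β * y n - a n)
    (hR : ∀ n, |y n| ≤ R) (h₀ : y 0 ∈ ℚ⟮β⟯) : (Set.range y).Finite := by
  have : FiniteDimensional ℚ ℚ⟮β⟯ := adjoin.finiteDimensional hβint.tower_top
  have : NumberField ℚ⟮β⟯ := ⟨⟩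
  have hmem : ∀ n, y n ∈ ℚ⟮β⟯ := by
    intro n
    induction n with
    | zero => exact h₀
    | succ n ih =>
      rw [hy]; exact sub_mem (mul_mem (mem_adjoin_simple_self ℚ β) ih) (intCast_mem _ _)
  set u : ℕ → ℚ⟮β⟯ := fun n => ⟨y n, hmem n⟩
  have hb : IsIntegral ℤ (AdjoinSimple.gen ℚ β) :=
    (isIntegral_algHom_iff ((ℚ⟮β⟯).val.restrictScalars ℤ) Subtype.val_injective).1 hβint
  have hu : (Set.range u).Finite := by
    refine NumberField.finite_range_of_recurrence hb (a := a) (M := |β| * R + R)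
      (fun n => Subtype.ext (hy n)) (fun n => ?_) (fun φ => ?_)
    · calc |(a n : ℝ)| = |β * y n - y (n + 1)| := by rw [hy]; ring_nf
        _ ≤ |β| * R + R := by
          grw [abs_sub, abs_mul, hR n, hR (n + 1)]
    · by_cases hφβ : φ (AdjoinSimple.gen ℚ β) = β
      · have : φ = Complex.ofRealHom.comp (algebraMap ℚ⟮β⟯ ℝ) :=
          ringHom_ext_adjoin_simple (by simpa using hφβ)
        exact Or.inr ⟨R, fun n => by simpa [this] using hR n⟩
      · exact Or.inl (hpisot _ (aeval_ringHom_gen_minpoly φ) hφβ)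
  rw [show y = Subtype.val ∘ u from rfl, Set.range_comp]
  exact hu.image _

theorem abs_iterate_le_max {β : ℝ} {T : ℝ → ℝ} (hT : ∀ x, T x = β * x - ⌊β * x⌋) (x : ℝ) :
    ∀ n, |T^[n] x| ≤ max |x| 1
  | 0 => le_max_left _ _
  | n + 1 => by
    rw [Function.iterate_succ_apply', hT, Int.self_sub_floor, abs_of_nonneg (Int.fract_nonneg _)]
    exact (Int.fract_lt_one _).le.trans (le_max_right _ _)

theorem stmt_11_general
    (β : ℝ) (hβ : 1 < β) (hβint : IsIntegral ℤ β)
    (hpisot : ∀ z : ℂ, Polynomial.aeval z (minpoly ℚ β) = 0 → z ≠ (β : ℂ) → ‖z‖ < 1)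
    (T : ℝ → ℝ) (hT : ∀ x, T x = β * x - ⌊β * x⌋)
    (x : ℝ) :
    {y : ℝ | ∃ n : ℕ, T^[n] x = y}.Finite ↔ x ∈ Subfield.closure ({β} : Set ℝ) := by
  have hy : ∀ n, T^[n + 1] x = β * T^[n] x - ⌊β * T^[n] x⌋ := fun n => by
    rw [Function.iterate_succ_apply', hT]
  change (Set.range fun n => T^[n] x).Finite ↔ _
  refine ⟨mem_closure_of_finite_range (pow_right_injective₀ (by linarith) hβ.ne') hy,
    fun hx => finite_range_of_pisot hβint hpisot hy (abs_iterate_le_max hT x) ?_⟩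
  exact Subfield.closure_le.2 (Set.singleton_subset_iff.2 (mem_adjoin_simple_self ℚ β)) hx

/-- Schmidt's theorem, part (2): for a Pisot number `β`, a point
`x ∈ [0,1)` has a finite forward orbit under the `β`-transformation if and
only if `x ∈ ℚ(β)`. -/
theorem stmt_11
    (β : ℝ) (hβ : 1 < β) (hβint : IsIntegral ℤ β)
    (hpisot : ∀ z : ℂ, Polynomial.aeval z (minpoly ℚ β) = 0 → z ≠ (β : ℂ) → ‖z‖ < 1)
    (T : ℝ → ℝ) (hT : ∀ x, T x = β * x - ⌊β * x⌋)
    (x : ℝ) (hx : x ∈ Set.Ico (0 : ℝ) 1) :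
    {y : ℝ | ∃ n : ℕ, T^[n] x = y}.Finite ↔ x ∈ Subfield.closure ({β} : Set ℝ) :=
  stmt_11_general β hβ hβint hpisot T hT x
end

section
/- Let n ≥ 2 and let G_n(x) = −1 + x + x^n. If n ≢ 5 (mod 6), then G_n is irreducible over ℚ. If n ≡ 5 (mod 6), then G_n factors as the product of the cyclotomic polynomial x² − x + 1 and the polynomial (−1 + x + x^n)/(x² − x + 1), which is irreducible over ℚ of degree n − 2 and nonreciprocal. -/
/-!
Ljunggren's method. For a unit trinomial `f ∈ ℤ[X]` with mirror `f*`, the only `k` with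
`f * f* = k * k*` are `±f` and `±f*`. If `f = c * g * h`, then `k = c * g * h*` is such a `k`, so `g`
or `h` divides `f*`; hence a divisor `q` of `f` that is coprime to `f*` is irreducible.

For `f = X ^ n + X - 1` a common complex root of `f` and `f*` is a primitive sixth root of unity `ζ`,
and `f ζ = 0` exactly when `n ≡ 5 (mod 6)`. So for `n ≢ 5` the trinomial is coprime to its mirror.
For `n ≡ 5` the factor `X ^ 2 - X + 1` of `f` is simple (`f' ζ = 1 - n ζ ≠ 0`), so the cofactor `q` is
coprime to `f*`. It is nonreciprocal, being monic with constant term `-1`.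
-/

open Polynomial

namespace Polynomial

theorem irreducible_of_mirror_of_eq_mul {R : Type*} [CommRing R] [NoZeroDivisors R]
    {f c q : R[X]} (hf : f = c * q) (hq : ¬IsUnit q)
    (hk : ∀ k, f * f.mirror = k * k.mirror → k = f ∨ k = -f ∨ k = f.mirror ∨ k = -f.mirror)
    (hcop : IsRelPrime q f.mirror) : Irreducible q := by
  refine ⟨hq, fun g h hgh => ?_⟩
  have g_dvd_q : g ∣ q := hgh ▸ dvd_mul_right g h
  have h_dvd_q : h ∣ q := hgh ▸ dvd_mul_left h g
  set k := c * g * h.mirror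
  have g_dvd_k : g ∣ k := (dvd_mul_left g c).mul_right _
  have h_dvd_k_mirror : h ∣ k.mirror := by
    rw [mirror_mul_of_domain, mirror_mirror]
    exact dvd_mul_left h _
  rcases hk k (by rw [hf, hgh]; simp only [k, mirror_mul_of_domain, mirror_mirror]; ring)
    with hkf | hkf | hkf | hkf
  · exact Or.inr (hcop h_dvd_q (by rwa [hkf] at h_dvd_k_mirror))
  · exact Or.inr (hcop h_dvd_q (by rwa [hkf, mirror_neg, dvd_neg] at h_dvd_k_mirror))
  · exact Or.inl (hcop g_dvd_q (hkf ▸ g_dvd_k))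
  · exact Or.inl (hcop g_dvd_q (by rwa [hkf, dvd_neg] at g_dvd_k))

theorem isRelPrime_of_forall_aeval_ne_zero {f g : ℤ[X]} (hf : IsUnit f.leadingCoeff)
    (h : ∀ z : ℂ, aeval z f = 0 → aeval z g ≠ 0) : IsRelPrime f g := by
  intro d hdf hdg
  obtain ⟨e, rfl⟩ := hdf
  have hd : IsUnit d.leadingCoeff := isUnit_of_mul_isUnit_left (leadingCoeff_mul d e ▸ hf)
  by_cases hdeg : d.natDegree = 0
  · rw [eq_C_of_natDegree_eq_zero hdeg]
    rwa [leadingCoeff, hdeg, ← isUnit_C] at hd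
  obtain ⟨z, hz⟩ := Complex.exists_root (f := d.map (algebraMap ℤ ℂ)) (by
    rw [degree_map_eq_of_injective (algebraMap ℤ ℂ).injective_int]
    exact natDegree_pos_iff_degree_pos.mp (Nat.pos_of_ne_zero hdeg))
  rw [IsRoot, eval_map_algebraMap] at hz
  obtain ⟨e', rfl⟩ := hdg
  exact (h z (by rw [aeval_mul, hz, zero_mul]) (by rw [aeval_mul, hz, zero_mul])).elim

theorem IsUnitTrinomial.eq_pm_or_eq_pm_mirror {p k : ℤ[X]} (hp : p.IsUnitTrinomial)
    (h : p * p.mirror = k * k.mirror) : k = p ∨ k = -p ∨ k = p.mirror ∨ k = -p.mirror := by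
  obtain ⟨a', b', c', hab', hbc', x, y, z, rfl⟩ := (isUnitTrinomial_iff'' h).mp hp
  obtain ⟨a, b, c, hab, hbc, u, v, w, rfl⟩ := hp
  have ha : a' = a := by
    have := congrArg natTrailingDegree h
    rw [natTrailingDegree_mul_mirror, natTrailingDegree_mul_mirror,
      trinomial_natTrailingDegree hab hbc u.ne_zero,
      trinomial_natTrailingDegree hab' hbc' x.ne_zero] at this
    omega
  have hc : c' = c := by
    have := congrArg natDegree h
    rw [natDegree_mul_mirror, natDegree_mul_mirror, trinomial_natDegree hab hbc w.ne_zero,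
      trinomial_natDegree hab' hbc' z.ne_zero] at this
    omega
  subst a' c'
  obtain rfl | rfl : y = v ∨ y = -v := by
    rcases Int.units_eq_one_or y with rfl | rfl <;>
      rcases Int.units_eq_one_or v with rfl | rfl <;> simp
  · exact (IsUnitTrinomial.irreducible_aux3 hab hbc hab' hbc' u y w x z rfl rfl h).imp id
      (Or.inr ∘ Or.inl)
  · -- the middle coefficients differ in sign, so compare `k` with `-p` instead
    have hneg : -trinomial a b c (u : ℤ) v w =
        trinomial a b c ((-u : ℤˣ) : ℤ) (-v : ℤˣ) (-w : ℤˣ) := by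
      simp only [trinomial_def, Units.val_neg, C_neg]
      ring
    rw [← neg_mul_neg, ← mirror_neg] at h
    rcases IsUnitTrinomial.irreducible_aux3 hab hbc hab' hbc' (-u) (-v) (-w) x z hneg rfl h
      with hk | hk
    · exact Or.inr (Or.inl hk)
    · exact Or.inr (Or.inr (Or.inr (hk.trans (mirror_neg _))))

end Polynomial

section SelmerTrinomial

variable {n : ℕ}

theorem X_pow_add_X_sub_one_eq_trinomial :
    (X ^ n + X - 1 : ℤ[X]) = trinomial 0 1 n ((-1 : ℤˣ) : ℤ) (1 : ℤˣ) (1 : ℤˣ) := by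
  simp only [trinomial_def, Units.val_neg, Units.val_one, C_neg, C_1]
  ring

theorem isUnitTrinomial_X_pow_add_X_sub_one (hn : 1 < n) :
    (X ^ n + X - 1 : ℤ[X]).IsUnitTrinomial :=
  ⟨0, 1, n, zero_lt_one, hn, -1, 1, 1, X_pow_add_X_sub_one_eq_trinomial⟩

theorem monic_X_pow_add_X_sub_one (hn : 1 < n) : (X ^ n + X - 1 : ℤ[X]).Monic := by
  rw [X_pow_add_X_sub_one_eq_trinomial, Units.val_one]
  exact trinomial_monic zero_lt_one hn

theorem natDegree_X_pow_add_X_sub_one (hn : 1 < n) : (X ^ n + X - 1 : ℤ[X]).natDegree = n := by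
  rw [X_pow_add_X_sub_one_eq_trinomial]
  exact trinomial_natDegree zero_lt_one hn one_ne_zero

theorem mirror_X_pow_add_X_sub_one (hn : 1 < n) :
    (X ^ n + X - 1 : ℤ[X]).mirror = 1 + X ^ (n - 1) - X ^ n := by
  rw [X_pow_add_X_sub_one_eq_trinomial, trinomial_mirror zero_lt_one hn (by simp) (by simp)]
  simp only [trinomial_def, Units.val_neg, Units.val_one, C_neg, C_1, add_zero]
  ring

theorem sq_sub_self_add_one_eq_zero_of_aeval_mirror (hn : 1 < n) {z : ℂ}
    (h : aeval z (X ^ n + X - 1 : ℤ[X]) = 0) (h' : aeval z (X ^ n + X - 1 : ℤ[X]).mirror = 0) :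
    z ^ 2 - z + 1 = 0 := by
  rw [mirror_X_pow_add_X_sub_one hn] at h'
  simp only [map_add, map_sub, map_pow, map_one, aeval_X] at h h'
  have hpow : z * z ^ (n - 1) = z ^ n := by rw [← pow_succ', Nat.sub_add_cancel hn.le]
  linear_combination z * h' - hpow + (z - 1) * h

theorem pow_add_self_sub_one_eq_zero_iff {z : ℂ} (hz : z ^ 2 - z + 1 = 0) :
    z ^ n + z - 1 = 0 ↔ n % 6 = 5 := by
  have hprim : IsPrimitiveRoot z 6 := by
    rw [← isRoot_cyclotomic_iff_charZero (by norm_num), cyclotomic_six]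
    simpa using hz
  have h5 : z ^ 5 = 1 - z := by linear_combination (z ^ 3 + z ^ 2 - 1) * hz
  rw [show z ^ n + z - 1 = z ^ n - z ^ 5 by rw [h5]; ring, sub_eq_zero,
    (hprim.isOfFinOrder (by norm_num)).pow_inj_mod, ← hprim.eq_orderOf]

theorem aeval_derivative_X_pow_add_X_sub_one_ne_zero (h6 : n % 6 = 5) {z : ℂ}
    (hz : z ^ 2 - z + 1 = 0) : aeval z (derivative (X ^ n + X - 1 : ℤ[X])) ≠ 0 := by
  have hz4 : z ^ (n - 1) = -z := by
    obtain ⟨k, rfl⟩ : ∃ k, n = 6 * k + 5 := ⟨n / 6, by omega⟩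
    rw [show 6 * k + 5 - 1 = 6 * k + 4 by omega, pow_add, pow_mul,
      (show z ^ 6 = 1 by linear_combination (z ^ 4 + z ^ 3 - z - 1) * hz), one_pow, one_mul]
    linear_combination (z ^ 2 + z) * hz
  simp only [derivative_X_pow, derivative_X, derivative_one, map_sub, map_add, map_mul,
    map_natCast, map_pow, aeval_X, map_one, sub_zero, hz4]
  intro h
  -- `n z = 1` with `z ^ 2 - z + 1 = 0` gives `n ^ 2 - n + 1 = 0`
  have : ((n ^ 2 + 1 : ℕ) : ℂ) = (n : ℂ) := by
    push_cast
    linear_combination (n : ℂ) ^ 2 * hz + ((n : ℂ) * z + 1 - n) * h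
  have := Nat.cast_injective this
  nlinarith

theorem irreducible_X_pow_add_X_sub_one (hn : 1 < n) (h6 : n % 6 ≠ 5) :
    Irreducible (X ^ n + X - 1 : ℤ[X]) :=
  (isUnitTrinomial_X_pow_add_X_sub_one hn).irreducible_of_coprime' fun _ ⟨h, h'⟩ =>
    h6 ((pow_add_self_sub_one_eq_zero_iff (sq_sub_self_add_one_eq_zero_of_aeval_mirror hn h h')).mp
      (by simpa using h))

theorem X_sq_sub_X_add_one_dvd (h6 : n % 6 = 5) : (X ^ 2 - X + 1 : ℤ[X]) ∣ X ^ n + X - 1 := by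
  obtain ⟨k, rfl⟩ : ∃ k, n = 6 * k + 5 := ⟨n / 6, by omega⟩
  have hdvd6 : (X ^ 2 - X + 1 : ℤ[X]) ∣ X ^ 6 - 1 := ⟨(X + 1) * (X ^ 3 - 1), by ring⟩
  replace hdvd6 : (X ^ 2 - X + 1 : ℤ[X]) ∣ (X ^ 6) ^ k - 1 :=
    hdvd6.trans (by simpa using sub_dvd_pow_sub_pow (X ^ 6 : ℤ[X]) 1 k)
  have hdvd5 : (X ^ 2 - X + 1 : ℤ[X]) ∣ X ^ 5 + X - 1 := ⟨X ^ 3 + X ^ 2 - 1, by ring⟩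
  rw [show (X ^ (6 * k + 5) + X - 1 : ℤ[X]) = X ^ 5 * ((X ^ 6) ^ k - 1) + (X ^ 5 + X - 1) by ring]
  exact (hdvd6.mul_left _).add hdvd5

theorem monic_X_sq_sub_X_add_one : (X ^ 2 - X + 1 : ℤ[X]).Monic := by
  monicity!

variable {q : ℤ[X]} (hq : (X ^ n + X - 1 : ℤ[X]) = (X ^ 2 - X + 1) * q)
include hq

theorem monic_of_X_pow_add_X_sub_one_eq_mul (hn : 1 < n) : q.Monic :=
  monic_X_sq_sub_X_add_one.of_mul_monic_left (hq ▸ monic_X_pow_add_X_sub_one hn)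

theorem natDegree_of_X_pow_add_X_sub_one_eq_mul (hn : 1 < n) : q.natDegree = n - 2 := by
  have := natDegree_X_pow_add_X_sub_one hn
  rw [hq, monic_X_sq_sub_X_add_one.natDegree_mul (monic_of_X_pow_add_X_sub_one_eq_mul hq hn),
    show (X ^ 2 - X + 1 : ℤ[X]).natDegree = 2 by compute_degree!] at this
  omega

theorem coeff_zero_of_X_pow_add_X_sub_one_eq_mul (hn : 1 < n) : q.coeff 0 = -1 := by
  have := congrArg (coeff · 0) hq
  simpa [mul_coeff_zero, (zero_lt_one.trans hn).ne] using this.symm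

theorem isRelPrime_mirror_of_X_pow_add_X_sub_one_eq_mul (h6 : n % 6 = 5) :
    IsRelPrime q (X ^ n + X - 1 : ℤ[X]).mirror := by
  have hn : 1 < n := by omega
  refine isRelPrime_of_forall_aeval_ne_zero
    ((monic_of_X_pow_add_X_sub_one_eq_mul hq hn).leadingCoeff ▸ isUnit_one) fun z hqz hfz' => ?_
  have hfz : aeval z (X ^ n + X - 1 : ℤ[X]) = 0 := by rw [hq, map_mul, hqz, mul_zero]
  have hz := sq_sub_self_add_one_eq_zero_of_aeval_mirror hn hfz hfz'
  refine aeval_derivative_X_pow_add_X_sub_one_ne_zero h6 hz ?_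
  simp [hq, derivative_mul, hqz, hz]

theorem irreducible_of_X_pow_add_X_sub_one_eq_mul (h6 : n % 6 = 5) : Irreducible q := by
  have hn : 1 < n := by omega
  refine irreducible_of_mirror_of_eq_mul hq (fun hu => ?_)
    (fun _ => (isUnitTrinomial_X_pow_add_X_sub_one hn).eq_pm_or_eq_pm_mirror)
    (isRelPrime_mirror_of_X_pow_add_X_sub_one_eq_mul hq h6)
  have := natDegree_of_X_pow_add_X_sub_one_eq_mul hq hn
  rw [natDegree_eq_zero_of_isUnit hu] at this
  omega

end SelmerTrinomial

/-- Selmer's theorem on the factorization of the trinomials `-1 + x + x^n`. -/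
theorem stmt_13
    (n : ℕ) (hn : 2 ≤ n)
    (G : Polynomial ℚ) (hG : G = X ^ n + X - 1) :
    (¬ n % 6 = 5 → Irreducible G) ∧
    (n % 6 = 5 →
      ∃ Q : Polynomial ℚ,
        G = (X ^ 2 - X + 1) * Q ∧ Irreducible Q ∧ Q.natDegree = n - 2 ∧
        Q.reverse ≠ Q) := by
  subst hG
  refine ⟨fun h6 => ?_, fun h6 => ?_⟩
  · simpa using (IsPrimitive.Int.irreducible_iff_irreducible_map_cast
      (monic_X_pow_add_X_sub_one hn).isPrimitive).mp (irreducible_X_pow_add_X_sub_one hn h6)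
  obtain ⟨q, hq⟩ := X_sq_sub_X_add_one_dvd h6
  have hmonic := monic_of_X_pow_add_X_sub_one_eq_mul hq hn
  refine ⟨q.map (Int.castRingHom ℚ), by simpa using congrArg (map (Int.castRingHom ℚ)) hq,
    (IsPrimitive.Int.irreducible_iff_irreducible_map_cast hmonic.isPrimitive).mp
      (irreducible_of_X_pow_add_X_sub_one_eq_mul hq h6),
    by rw [hmonic.natDegree_map, natDegree_of_X_pow_add_X_sub_one_eq_mul hq hn], fun hrev => ?_⟩
  have := coeff_zero_reverse (q.map (Int.castRingHom ℚ))
  rw [hrev, coeff_map, coeff_zero_of_X_pow_add_X_sub_one_eq_mul hq hn,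
    (hmonic.map _).leadingCoeff] at this
  norm_num at this
end

section
/- Let n ≥ 3 and let f(x) = −1 + x + x^n + x^{m_1} + x^{m_2} + ⋯ + x^{m_s} with s ≥ 1, m_1 − n ≥ n − 1, and m_{q+1} − m_q ≥ n − 1 for 1 ≤ q < s (i.e. f belongs to the class B_n). Then f has exactly one real zero in the open interval (0,1), and this zero lies in the open interval (θ_{n−1}, θ_n). -/
/-!
Let `a = θ_{n-1}` and `t = a^{n-1} = 1 - a`. Then `-1 + a + a^n = -t + a t = -t²`, while the gap
conditions give `m_q ≥ n + q(n-1)`, so the tail `∑ a^{m_q}` is dominated by the geometric series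
`a ∑_{q ≥ 1} t^{q+1} = a t² / (1 - t) = t²`; hence `f(θ_{n-1}) < 0`. At `b = θ_n` only the
positive tail survives, so `f(θ_n) > 0`. Since `f` is strictly increasing on `[0, ∞)`, the
intermediate value theorem gives exactly one zero in `(0,1)`, and it lies in `(θ_{n-1}, θ_n)`.
-/

open Finset Set

theorem add_mul_le_of_gaps {n k s : ℕ} {m : ℕ → ℕ} (hm1 : n + k ≤ m 1)
    (hmq : ∀ q, 1 ≤ q → q < s → m q + k ≤ m (q + 1)) :
    ∀ q ∈ Finset.Icc 1 s, n + q * k ≤ m q := by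
  intro q hq
  rw [Finset.mem_Icc] at hq
  obtain ⟨hq1, hqs⟩ := hq
  induction q, hq1 using Nat.le_induction with
  | base => simpa using hm1
  | succ p hp ih =>
    have hgap := hmq p hp (by omega)
    have hp' := ih (by omega)
    rw [add_one_mul]
    omega

theorem geom_sum_Icc_one_mul_one_sub_lt {t : ℝ} (ht : 0 < t) (s : ℕ) :
    (∑ q ∈ Finset.Icc 1 s, t ^ q) * (1 - t) < t := by
  rw [← Finset.Ico_add_one_right_eq_Icc, geom_sum_Ico_mul_neg t (by omega), pow_one]
  linarith [pow_pos ht (s + 1)]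

theorem lt_of_trinomial_roots {k l : ℕ} (hkl : k < l) {a b : ℝ} (ha : a ∈ Ioo (0 : ℝ) 1)
    (hb : 0 ≤ b) (ha' : -1 + a + a ^ k = 0) (hb' : -1 + b + b ^ l = 0) : a < b := by
  by_contra! hba
  have h1 : b ^ l ≤ a ^ l := pow_le_pow_left₀ hb hba l
  have h2 : a ^ l < a ^ k := pow_lt_pow_right_of_lt_one₀ ha.1 ha.2 hkl
  linarith

noncomputable def almostNewmanPoly (n s : ℕ) (m : ℕ → ℕ) (x : ℝ) : ℝ :=
  -1 + x + x ^ n + ∑ q ∈ Finset.Icc 1 s, x ^ m q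

namespace almostNewmanPoly

variable {n s : ℕ} {m : ℕ → ℕ}

theorem continuous : Continuous (almostNewmanPoly n s m) := by
  unfold almostNewmanPoly
  fun_prop

theorem strictMonoOn : StrictMonoOn (almostNewmanPoly n s m) (Ici 0) := by
  intro x hx y _ hxy
  have hpow : ∀ k, x ^ k ≤ y ^ k := fun k => pow_le_pow_left₀ hx hxy.le k
  have hsum := Finset.sum_le_sum fun q (_ : q ∈ Finset.Icc 1 s) => hpow (m q)
  unfold almostNewmanPoly
  linarith [hpow n]

theorem pos_of_trinomial_root (hs : 1 ≤ s) {b : ℝ} (hb : 0 < b) (hb' : -1 + b + b ^ n = 0) :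
    0 < almostNewmanPoly n s m b := by
  have htail : 0 < ∑ q ∈ Finset.Icc 1 s, b ^ m q :=
    Finset.sum_pos (fun q _ => pow_pos hb _) (Finset.nonempty_Icc.mpr hs)
  unfold almostNewmanPoly
  linarith

theorem neg_of_trinomial_root (hn : 1 ≤ n) {a : ℝ} (ha : a ∈ Ioo (0 : ℝ) 1)
    (ha' : -1 + a + a ^ (n - 1) = 0) (hm : ∀ q ∈ Finset.Icc 1 s, n + q * (n - 1) ≤ m q) :
    almostNewmanPoly n s m a < 0 := by
  obtain ⟨ha0, ha1⟩ := ha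
  set t := a ^ (n - 1) with ht
  have ht0 : 0 < t := pow_pos ha0 _
  have han : a ^ n = a * t := by rw [ht, ← pow_succ', Nat.sub_add_cancel hn]
  have hhead : -1 + a + a ^ n = -t ^ 2 := by
    rw [han]
    linear_combination (1 + t) * ha'
  have hterm : ∀ q ∈ Finset.Icc 1 s, a ^ m q ≤ a * t * t ^ q := fun q hq =>
    calc a ^ m q ≤ a ^ (n + q * (n - 1)) := pow_le_pow_of_le_one ha0.le ha1.le (hm q hq)
      _ = a * t * t ^ q := by rw [pow_add, han, mul_comm q, pow_mul]
  have hgeom := geom_sum_Icc_one_mul_one_sub_lt ht0 s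
  rw [show 1 - t = a by linarith] at hgeom
  have htail : ∑ q ∈ Finset.Icc 1 s, a ^ m q < t ^ 2 :=
    calc ∑ q ∈ Finset.Icc 1 s, a ^ m q ≤ a * t * ∑ q ∈ Finset.Icc 1 s, t ^ q := by
          rw [Finset.mul_sum]; exact Finset.sum_le_sum hterm
      _ = t * ((∑ q ∈ Finset.Icc 1 s, t ^ q) * a) := by ring
      _ < t * t := mul_lt_mul_of_pos_left hgeom ht0
      _ = t ^ 2 := (sq t).symm
  unfold almostNewmanPoly
  linarith

end almostNewmanPoly

/-- Every polynomial of the class `B_n` has a unique real zero in `(0,1)`,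
and this zero lies in `(θ_{n-1}, θ_n)`. -/
theorem stmt_15
    (n : ℕ) (hn : 3 ≤ n) (s : ℕ) (hs : 1 ≤ s)
    (m : ℕ → ℕ) (hm1 : n + (n - 1) ≤ m 1)
    (hmq : ∀ q, 1 ≤ q → q < s → m q + (n - 1) ≤ m (q + 1))
    (f : ℝ → ℝ)
    (hf : ∀ x, f x = -1 + x + x ^ n + ∑ q ∈ Finset.Icc 1 s, x ^ m q)
    (θa : ℝ) (hθa : θa ∈ Set.Ioo (0 : ℝ) 1) (hθa' : -1 + θa + θa ^ (n - 1) = 0)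
    (θb : ℝ) (hθb : θb ∈ Set.Ioo (0 : ℝ) 1) (hθb' : -1 + θb + θb ^ n = 0) :
    ∃ x : ℝ, x ∈ Set.Ioo θa θb ∧ f x = 0 ∧
      ∀ y ∈ Set.Ioo (0 : ℝ) 1, f y = 0 → y = x := by
  obtain rfl : f = almostNewmanPoly n s m := funext hf
  have hfa := almostNewmanPoly.neg_of_trinomial_root (by omega) hθa hθa'
    (add_mul_le_of_gaps hm1 hmq)
  have hfb := almostNewmanPoly.pos_of_trinomial_root (m := m) hs hθb.1 hθb'
  have hab := lt_of_trinomial_roots (by omega) hθa hθb.1.le hθa' hθb'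
  obtain ⟨x, hx, hfx⟩ :=
    intermediate_value_Ioo hab.le almostNewmanPoly.continuous.continuousOn ⟨hfa, hfb⟩
  refine ⟨x, hx, hfx, fun y hy hfy => ?_⟩
  exact almostNewmanPoly.strictMonoOn.injOn hy.1.le (hθa.1.trans hx.1).le (hfy.trans hfx.symm)
end

section
/- For each integer k ≥ 1, the rational function P_{2k}(z) = (1 − z^{2k}(1 + z − z²))/(1 − z) is a polynomial with integer coefficients, irreducible over ℚ, which has exactly one root of modulus > 1; this root, denoted β_k, is a real Pisot number (all other roots of P_{2k} have modulus < 1). Moreover β_k < (1+√5)/2 for all k ≥ 1, the sequence (β_k)_{k≥1} is strictly increasing, and lim_{k→∞} β_k = (1+√5)/2. -/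
/-!
Write `P_n = 1 + X + ⋯ + X^(n-1) - X^(n+1)`, so that `(1 - z) P_n(z) = 1 - z^n (1 + z - z^2)`.
For `x > 0` the quotient `P_n(x) / x^(n+1) = ∑_{j<n} x^(j-n-1) - 1` is strictly decreasing, so
`P_n` has a single positive root `β_n`, and the sign of `P_n(x)` is that of `β_n - x`. Evaluating
the identity at `1`, at the golden ratio `φ` (where `1 + φ - φ^2 = 0`) and at `β_n` (which gives
`P_(n+1)(β_n) = 1`) yields `1 < β_n < φ` and `β_n < β_(n+1)`; for `1 < a < φ` the term
`a^n (1 + a - a^2)` eventually exceeds `1`, forcing `a < β_n`, so `β_n → φ`.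

A complex root `z` satisfies `|z|^(n+1) ≤ ∑_{j<n} |z|^j`, hence `|z| ≤ β_n`. If `|z| ≥ 1` and `z`
is not real, then `1 = |z|^n |1 + z - z^2| > |z|^n (1 + |z| - |z|^2) ≥ 1`, the last step because
`P_n(|z|) ≥ 0`; real roots other than `β_n` lie in `(-1, 0)` since `n` is even. Finally `β_n` is a
simple root and `P_n(0) = 1`, `lc(P_n) = -1`: in a factorisation over `ℤ`, the factor that does not
vanish at `β_n` has unit constant and leading coefficients and all its roots in the open unit
disc, which by `|c_0| = |c_d| ∏ |roots|` forces it to be constant.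
-/

open Polynomial Filter

open Finset

theorem norm_multiset_prod_lt_one {K : Type*} [NormedField K] {s : Multiset K} (hs : s ≠ 0)
    (h : ∀ w ∈ s, ‖w‖ < 1) : ‖s.prod‖ < 1 := by
  induction s using Multiset.induction_on with
  | empty => exact absurd rfl hs
  | cons a s ih =>
    have ha := h a (Multiset.mem_cons_self a s)
    rw [Multiset.prod_cons, norm_mul]
    rcases eq_or_ne s 0 with rfl | hs'
    · simpa using ha
    · have := ih hs' fun w hw => h w (Multiset.mem_cons_of_mem hw)
      nlinarith [norm_nonneg a, norm_nonneg s.prod]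

lemma norm_intCast_eq_one_of_isUnit {K : Type*} [SeminormedRing K] [NormOneClass K] {u : ℤ}
    (hu : IsUnit u) : ‖(u : K)‖ = 1 := by
  rcases Int.isUnit_iff.mp hu with rfl | rfl <;> simp

lemma Complex.aeval_ofReal {R : Type*} [CommRing R] [Algebra R ℝ] [Algebra R ℂ]
    [IsScalarTower R ℝ ℂ] (p : R[X]) (x : ℝ) : aeval (x : ℂ) p = (aeval x p : ℝ) :=
  aeval_algebraMap_apply ℂ x p

lemma Complex.one_add_norm_sub_norm_sq_lt {z : ℂ} (hz : 1 ≤ ‖z‖) (him : z.im ≠ 0) :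
    1 + ‖z‖ - ‖z‖ ^ 2 < ‖1 + z - z ^ 2‖ := by
  have hr : ‖z‖ ^ 2 = z.re ^ 2 + z.im ^ 2 := by rw [Complex.sq_norm, Complex.normSq_apply]; ring
  have hw : ‖1 + z - z ^ 2‖ ^ 2 =
      (1 + z.re - z.re ^ 2 + z.im ^ 2) ^ 2 + (z.im - 2 * z.re * z.im) ^ 2 := by
    rw [Complex.sq_norm, Complex.normSq_apply]
    simp only [pow_two, sub_re, add_re, one_re, mul_re, sub_im, add_im, one_im, zero_add, mul_im]
    ring
  have hre : z.re ≤ ‖z‖ := Complex.re_le_norm z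
  -- `‖1 + z - z ^ 2‖ ^ 2 - (1 + ‖z‖ - ‖z‖ ^ 2) ^ 2 = 2 (‖z‖ - z.re) (‖z‖ ^ 2 - 1) + 4 z.im ^ 2`
  have hgap : (1 + ‖z‖ - ‖z‖ ^ 2) ^ 2 < ‖1 + z - z ^ 2‖ ^ 2 := by
    have h4 : 0 < z.im ^ 2 := by positivity
    have : 0 ≤ (‖z‖ - z.re) * (‖z‖ ^ 2 - 1) := mul_nonneg (by linarith) (by nlinarith)
    nlinarith
  exact (abs_lt_of_sq_lt_sq hgap (norm_nonneg _)).trans_le' (le_abs_self _)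

namespace Polynomial

theorem norm_coeff_zero_lt_norm_leadingCoeff {p : ℂ[X]} (hp : p.natDegree ≠ 0)
    (h : ∀ w ∈ p.roots, ‖w‖ < 1) : ‖p.coeff 0‖ < ‖p.leadingCoeff‖ := by
  have hsplit := IsAlgClosed.splits p
  have hroots : p.roots ≠ 0 := by
    rw [← Multiset.card_pos, ← hsplit.natDegree_eq_card_roots]
    omega
  have hlc : p.leadingCoeff ≠ 0 := leadingCoeff_ne_zero.mpr (by rintro rfl; simp at hp)
  rw [hsplit.coeff_zero_eq_leadingCoeff_mul_prod_roots, norm_mul, norm_mul, norm_pow, norm_neg,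
    norm_one, one_pow, one_mul]
  exact mul_lt_of_lt_one_right (norm_pos_iff.mpr hlc) (norm_multiset_prod_lt_one hroots h)

theorem isUnit_of_forall_norm_lt_one {b : ℤ[X]} (h0 : IsUnit (b.coeff 0))
    (hlc : IsUnit b.leadingCoeff) (h : ∀ w : ℂ, aeval w b = 0 → ‖w‖ < 1) : IsUnit b := by
  by_contra hb
  have hdeg : b.natDegree ≠ 0 := fun hdeg =>
    hb (eq_C_of_natDegree_eq_zero hdeg ▸ isUnit_C.mpr h0)
  have hinj : Function.Injective (algebraMap ℤ ℂ) := RingHom.injective_int _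
  have := norm_coeff_zero_lt_norm_leadingCoeff (p := b.map (algebraMap ℤ ℂ))
    (by rwa [natDegree_map_eq_of_injective hinj])
    fun w hw => h w (mem_aroots.mp hw).2
  rw [coeff_map, leadingCoeff_map_of_injective hinj, algebraMap_int_eq, eq_intCast, eq_intCast,
    norm_intCast_eq_one_of_isUnit h0, norm_intCast_eq_one_of_isUnit hlc] at this
  exact lt_irrefl 1 this

theorem irreducible_of_norm_lt_one_of_simple_root {p : ℤ[X]} (h0 : IsUnit (p.coeff 0))
    (hlc : IsUnit p.leadingCoeff) {β : ℂ} (hβ : aeval β p = 0) (hβ' : aeval β (derivative p) ≠ 0)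
    (h : ∀ z : ℂ, aeval z p = 0 → z ≠ β → ‖z‖ < 1) : Irreducible p := by
  have hcofactor : ∀ a b, p = a * b → aeval β a = 0 → IsUnit b := by
    rintro a b rfl ha
    refine isUnit_of_forall_norm_lt_one ?_ ?_ fun w hw => h w (by simp [hw]) ?_
    · rw [mul_coeff_zero] at h0
      exact isUnit_of_mul_isUnit_right h0
    · rw [leadingCoeff_mul] at hlc
      exact isUnit_of_mul_isUnit_right hlc
    · rintro rfl
      simp [derivative_mul, ha, hw] at hβ'
  refine ⟨fun hu => by simpa [hβ] using hu.map (aeval β), fun a b hab => ?_⟩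
  rw [hab, map_mul] at hβ
  rcases mul_eq_zero.mp hβ with ha | hb
  · exact Or.inr (hcofactor a b hab ha)
  · exact Or.inl (hcofactor b a (hab.trans (mul_comm a b)) hb)

end Polynomial

namespace PisotFamily

noncomputable def poly (n : ℕ) : ℤ[X] := ∑ j ∈ range n, X ^ j - X ^ (n + 1)

theorem one_sub_X_mul_poly (n : ℕ) : (1 - X) * poly n = 1 - X ^ n * (1 + X - X ^ 2) := by
  have h := geom_sum_mul (X : ℤ[X]) n
  unfold poly
  linear_combination -h

section Eval

variable {A : Type*} [CommRing A] (n : ℕ) (z : A)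

@[simp]
lemma aeval_poly : aeval z (poly n) = ∑ j ∈ range n, z ^ j - z ^ (n + 1) := by
  simp [poly]

lemma one_sub_mul_aeval_poly : (1 - z) * aeval z (poly n) = 1 - z ^ n * (1 + z - z ^ 2) := by
  simpa using congrArg (aeval z) (one_sub_X_mul_poly n)

lemma aeval_poly_succ : aeval z (poly (n + 1)) = aeval z (poly n) + z ^ n * (1 + z - z ^ 2) := by
  simp only [aeval_poly, sum_range_succ]
  ring

variable {n z}

lemma pow_mul_eq_one_of_aeval_poly_eq_zero (h : aeval z (poly n) = 0) :
    z ^ n * (1 + z - z ^ 2) = 1 := by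
  linear_combination -(one_sub_mul_aeval_poly n z).symm.trans (by rw [h, mul_zero])

lemma mul_aeval_derivative_poly :
    z * aeval z (derivative (poly n)) = ∑ j ∈ range n, j * z ^ j - (n + 1) * z ^ (n + 1) := by
  simp only [poly, derivative_sub, map_sum, derivative_X_pow, map_natCast, aeval_sub, map_mul,
    map_pow, aeval_X, mul_sub, mul_sum, Nat.add_sub_cancel]
  congr 1
  · refine sum_congr rfl fun j _ => ?_
    rcases j with _ | j
    · simp
    · rw [Nat.add_sub_cancel, pow_succ]
      push_cast
      ring
  · push_cast
    ring

end Eval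

lemma aeval_poly_neg_of_lt {n : ℕ} (hn : n ≠ 0) {x y : ℝ} (hx : 0 < x) (hxy : x < y)
    (h : aeval x (poly n) ≤ 0) : aeval y (poly n) < 0 := by
  rw [aeval_poly, sub_nonpos] at h
  rw [aeval_poly, sub_neg]
  have hy : 0 < y := hx.trans hxy
  have hcross : x ^ (n + 1) * ∑ j ∈ range n, y ^ j < y ^ (n + 1) * ∑ j ∈ range n, x ^ j := by
    rw [mul_sum, mul_sum]
    refine sum_lt_sum_of_nonempty (nonempty_range_iff.mpr hn) fun j hj => ?_
    have hjn := mem_range.mp hj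
    obtain ⟨m, hm, hjm⟩ : ∃ m, m ≠ 0 ∧ n + 1 = j + m := ⟨n + 1 - j, by omega, by omega⟩
    have : x ^ m < y ^ m := pow_lt_pow_left₀ hxy hx.le hm
    rw [hjm, pow_add, pow_add]
    nlinarith [pow_pos hx j, pow_pos hy j, mul_pos (pow_pos hx j) (pow_pos hy j)]
  have hxn := pow_pos hx (n + 1)
  nlinarith [pow_pos hy (n + 1)]

lemma aeval_poly_goldenRatio_neg (n : ℕ) : aeval Real.goldenRatio (poly n) < 0 := by
  have h := one_sub_mul_aeval_poly n Real.goldenRatio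
  rw [show 1 + Real.goldenRatio - Real.goldenRatio ^ 2 = 0 by
    rw [Real.goldenRatio_sq]; ring, mul_zero, sub_zero] at h
  nlinarith [Real.one_lt_goldenRatio]

lemma exists_pos_aeval_poly_eq_zero {n : ℕ} (hn : n ≠ 0) :
    ∃ x : ℝ, 0 < x ∧ aeval x (poly n) = 0 := by
  have h1 : 0 ≤ aeval (1 : ℝ) (poly n) := by
    have : (1 : ℝ) ≤ n := by exact_mod_cast Nat.one_le_iff_ne_zero.mpr hn
    simpa using this
  obtain ⟨x, hx, hx0⟩ := intermediate_value_Icc' Real.one_lt_goldenRatio.le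
    (Polynomial.continuous_aeval (poly n)).continuousOn
    ⟨(aeval_poly_goldenRatio_neg n).le, h1⟩
  exact ⟨x, one_pos.trans_le hx.1, hx0⟩

-- `poly 0 = -X` has no positive root, so `root 0` is a junk value.
noncomputable def root (n : ℕ) : ℝ :=
  Classical.epsilon fun x => 0 < x ∧ aeval x (poly n) = 0

variable {n : ℕ}

lemma root_pos (hn : n ≠ 0) : 0 < root n :=
  (Classical.epsilon_spec (exists_pos_aeval_poly_eq_zero hn)).1

lemma aeval_root (hn : n ≠ 0) : aeval (root n) (poly n) = 0 :=
  (Classical.epsilon_spec (exists_pos_aeval_poly_eq_zero hn)).2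

lemma aeval_poly_pos_iff (hn : n ≠ 0) {x : ℝ} (hx : 0 < x) :
    0 < aeval x (poly n) ↔ x < root n := by
  constructor
  · intro hpos
    by_contra! hle
    rcases hle.eq_or_lt with heq | hlt
    · exact hpos.ne' (heq ▸ aeval_root hn)
    · exact (aeval_poly_neg_of_lt hn (root_pos hn) hlt (aeval_root hn).le).not_gt hpos
  · intro hlt
    by_contra! hle
    exact (aeval_poly_neg_of_lt hn hx hlt hle).ne (aeval_root hn)

lemma aeval_poly_nonneg_iff (hn : n ≠ 0) {x : ℝ} (hx : 0 < x) :
    0 ≤ aeval x (poly n) ↔ x ≤ root n := by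
  constructor
  · intro hnonneg
    by_contra! hlt
    exact (aeval_poly_neg_of_lt hn (root_pos hn) hlt (aeval_root hn).le).not_ge hnonneg
  · intro hle
    rcases hle.eq_or_lt with rfl | hlt
    · exact (aeval_root hn).ge
    · exact ((aeval_poly_pos_iff hn hx).mpr hlt).le

lemma eq_root_of_aeval_poly_eq_zero (hn : n ≠ 0) {x : ℝ} (hx : 0 < x)
    (h : aeval x (poly n) = 0) : x = root n :=
  le_antisymm ((aeval_poly_nonneg_iff hn hx).mp h.ge)
    (not_lt.mp fun hlt => ((aeval_poly_pos_iff hn hx).mpr hlt).ne' h)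

lemma one_lt_root (hn : 2 ≤ n) : 1 < root n := by
  refine (aeval_poly_pos_iff (by omega) one_pos).mp ?_
  simpa using Nat.lt_of_succ_le hn

lemma root_lt_goldenRatio (hn : n ≠ 0) : root n < Real.goldenRatio := by
  by_contra! hle
  exact (aeval_poly_goldenRatio_neg n).not_ge
    ((aeval_poly_nonneg_iff hn Real.goldenRatio_pos).mpr hle)

lemma root_lt_root_succ (hn : n ≠ 0) : root n < root (n + 1) := by
  refine (aeval_poly_pos_iff n.succ_ne_zero (root_pos hn)).mp ?_
  rw [aeval_poly_succ, aeval_root hn, pow_mul_eq_one_of_aeval_poly_eq_zero (aeval_root hn)]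
  norm_num

lemma aeval_derivative_poly_root_neg (hn : n ≠ 0) : aeval (root n) (derivative (poly n)) < 0 := by
  set β := root n
  have hβ : β ^ (n + 1) = ∑ j ∈ range n, β ^ j :=
    (sub_eq_zero.mp (by simpa using aeval_root hn)).symm
  have hsum : β * aeval β (derivative (poly n)) = -∑ j ∈ range n, ((n + 1 - j : ℝ) * β ^ j) := by
    rw [mul_aeval_derivative_poly, hβ, mul_sum, ← sum_sub_distrib, ← sum_neg_distrib]
    exact sum_congr rfl fun j _ => by ring
  have hpos : 0 < ∑ j ∈ range n, ((n + 1 - j : ℝ) * β ^ j) := by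
    refine sum_pos (fun j hj => mul_pos ?_ (pow_pos (root_pos hn) j)) (nonempty_range_iff.mpr hn)
    have : (j : ℝ) < n := by exact_mod_cast mem_range.mp hj
    linarith
  nlinarith [root_pos hn]

lemma monic_neg_poly (n : ℕ) : (-poly n).Monic := by
  rw [poly, neg_sub]
  refine monic_X_pow_sub ((degree_sum_le _ _).trans_lt ?_)
  rw [Finset.sup_lt_iff (WithBot.bot_lt_coe _)]
  intro j hj
  rw [degree_X_pow]
  exact_mod_cast (mem_range.mp hj).trans n.lt_succ_self

lemma leadingCoeff_poly (n : ℕ) : (poly n).leadingCoeff = -1 := by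
  rw [← neg_neg (poly n), leadingCoeff_neg, (monic_neg_poly n).leadingCoeff]

lemma coeff_zero_poly (hn : n ≠ 0) : (poly n).coeff 0 = 1 := by
  simp [poly, coeff_X_pow, Nat.pos_of_ne_zero hn]

lemma isIntegral_root (hn : n ≠ 0) : IsIntegral ℤ (root n) :=
  ⟨-poly n, monic_neg_poly n, by rw [← aeval_def, map_neg, aeval_root hn, neg_zero]⟩

lemma eventually_lt_root {a : ℝ} (ha : a < Real.goldenRatio) : ∀ᶠ n in atTop, a < root n := by
  rcases le_or_gt a 1 with ha1 | ha1
  · filter_upwards [eventually_ge_atTop 2] with n hn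
    exact ha1.trans_lt (one_lt_root hn)
  have hc : 0 < 1 + a - a ^ 2 := by nlinarith [Real.goldenRatio_sq, Real.one_lt_goldenRatio]
  have hgrow : Tendsto (fun n : ℕ => a ^ n * (1 + a - a ^ 2)) atTop atTop :=
    (tendsto_pow_atTop_atTop_of_one_lt ha1).atTop_mul_const hc
  filter_upwards [hgrow.eventually_gt_atTop 1, eventually_ne_atTop 0] with n hgt hn
  refine (aeval_poly_pos_iff hn (one_pos.trans ha1)).mp ?_
  nlinarith [one_sub_mul_aeval_poly n a]

lemma tendsto_root : Tendsto root atTop (nhds Real.goldenRatio) :=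
  tendsto_order.mpr ⟨fun _ ha => eventually_lt_root ha, fun _ ha =>
    (eventually_ne_atTop 0).mono fun _ hn => (root_lt_goldenRatio hn).trans ha⟩

lemma norm_le_root (hn : n ≠ 0) {z : ℂ} (hz : aeval z (poly n) = 0) : ‖z‖ ≤ root n := by
  rcases (norm_nonneg z).eq_or_lt with h0 | hpos
  · exact h0 ▸ (root_pos hn).le
  refine (aeval_poly_nonneg_iff hn hpos).mp ?_
  have hpow : z ^ (n + 1) = ∑ j ∈ range n, z ^ j := (sub_eq_zero.mp (by simpa using hz)).symm
  have : ‖z‖ ^ (n + 1) ≤ ∑ j ∈ range n, ‖z‖ ^ j := by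
    simpa only [← norm_pow, hpow] using norm_sum_le (range n) (z ^ ·)
  simpa using this

lemma one_le_pow_mul_of_le_root (hn : n ≠ 0) {r : ℝ} (h1 : 1 ≤ r) (hr : r ≤ root n) :
    1 ≤ r ^ n * (1 + r - r ^ 2) := by
  have := (aeval_poly_nonneg_iff hn (one_pos.trans_le h1)).mpr hr
  nlinarith [one_sub_mul_aeval_poly n r]

theorem norm_lt_one_of_aeval_poly_eq_zero (hn : n ≠ 0) (he : Even n) {z : ℂ}
    (hz : aeval z (poly n) = 0) (hne : z ≠ root n) : ‖z‖ < 1 := by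
  by_contra! h1
  have hz1 := pow_mul_eq_one_of_aeval_poly_eq_zero hz
  rcases eq_or_ne z.im 0 with him | him
  · obtain ⟨x, rfl⟩ : ∃ x : ℝ, (x : ℂ) = z := ⟨z.re, Complex.ext rfl him.symm⟩
    rw [Complex.norm_real, Real.norm_eq_abs] at h1
    rcases le_or_gt x 0 with hx | hx
    · have hx1 : x ≤ -1 := by rw [abs_of_nonpos hx] at h1; linarith
      have : x ^ n * (1 + x - x ^ 2) = 1 := by exact_mod_cast hz1
      nlinarith [he.pow_pos (show x ≠ 0 by linarith)]
    · have hx0 : aeval x (poly n) = 0 :=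
        Complex.ofReal_eq_zero.mp ((Complex.aeval_ofReal (poly n) x).symm.trans hz)
      exact hne (congrArg _ (eq_root_of_aeval_poly_eq_zero hn hx hx0))
  · have hnorm := congrArg norm hz1
    rw [norm_mul, norm_pow, norm_one] at hnorm
    have hlt := Complex.one_add_norm_sub_norm_sq_lt h1 him
    have hle := one_le_pow_mul_of_le_root hn h1 (norm_le_root hn hz)
    nlinarith [pow_pos (one_pos.trans_le h1) n]

theorem irreducible_map_poly (hn : n ≠ 0) (he : Even n) :
    Irreducible ((poly n).map (Int.castRingHom ℚ)) := by
  have h0 : IsUnit ((poly n).coeff 0) := coeff_zero_poly hn ▸ isUnit_one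
  refine (IsPrimitive.Int.irreducible_iff_irreducible_map_cast fun r hr =>
    isUnit_of_dvd_unit ((C_dvd_iff_dvd_coeff _ _).mp hr 0) h0).mp ?_
  refine irreducible_of_norm_lt_one_of_simple_root h0 (leadingCoeff_poly n ▸ isUnit_one.neg)
    (β := root n) ?_ ?_ fun z hz hne => norm_lt_one_of_aeval_poly_eq_zero hn he hz hne
  · rw [Complex.aeval_ofReal, aeval_root hn, Complex.ofReal_zero]
  · rw [Complex.aeval_ofReal]
    exact Complex.ofReal_ne_zero.mpr (aeval_derivative_poly_root_neg hn).ne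

end PisotFamily

/-- The polynomials `P_{2k}(z) = (1 - z^{2k}(1 + z - z^2))/(1 - z)` are
integer polynomials, irreducible over `ℚ`, each with exactly one root
`β_k` of modulus `> 1`, which is a Pisot number; the sequence `(β_k)` is
strictly increasing with limit the golden ratio `(1 + √5)/2`. -/
theorem stmt_17 :
    ∃ β : ℕ → ℝ,
      (∀ k, 1 ≤ k → ∃ P : Polynomial ℤ,
        (1 - X) * P = 1 - X ^ (2 * k) * (1 + X - X ^ 2) ∧
        Irreducible (P.map (Int.castRingHom ℚ)) ∧
        1 < β k ∧ IsIntegral ℤ (β k) ∧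
        Polynomial.aeval (β k) P = 0 ∧
        (∀ z : ℂ, Polynomial.aeval z P = 0 → z ≠ (β k : ℂ) → ‖z‖ < 1) ∧
        β k < (1 + Real.sqrt 5) / 2) ∧
      (∀ k, 1 ≤ k → β k < β (k + 1)) ∧
      Tendsto β atTop (nhds ((1 + Real.sqrt 5) / 2)) := by
  open PisotFamily in
  refine ⟨fun k => root (2 * k), fun k hk => ?_, fun k hk => ?_, ?_⟩
  · have hn : 2 * k ≠ 0 := by omega
    exact ⟨poly (2 * k), one_sub_X_mul_poly _, irreducible_map_poly hn (even_two_mul k),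
      one_lt_root (by omega), isIntegral_root hn, aeval_root hn,
      fun z hz hne => norm_lt_one_of_aeval_poly_eq_zero hn (even_two_mul k) hz hne,
      root_lt_goldenRatio hn⟩
  · exact (root_lt_root_succ (by omega)).trans (root_lt_root_succ (by omega))
  · exact tendsto_root.comp (tendsto_id.const_mul_atTop' two_pos)
end

section
/- Let α be an algebraic integer of degree d with Galois conjugates α_1 = α, α_2, …, α_d, and suppose |α_i| ≠ 1 for every i. For q ≥ 1 let Δ_q(α) = |∏_{i=1}^d (1 − α_i^q)| denote the q-th Pierce number of α (which is a nonzero integer under these hypotheses). Then lim_{q→∞} Δ_{q+1}(α)/Δ_q(α) = M(α), where M(α) = ∏_{i=1}^d max(1, |α_i|) is the Mahler measure of α. -/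
open Polynomial Filter Topology

/-! Each factor of `Δ_q` behaves like `1` when `|αᵢ| < 1` and like `|αᵢ|^q` when `|αᵢ| > 1`
(write `1 - z^q = -z^q (1 - z⁻¹^q)`), so the ratio of consecutive factors tends to
`max 1 |αᵢ|`; the ratio of the products is the product of these ratios. -/

theorem Filter.Tendsto.div_succ_of_ne_zero {G₀ : Type*} [GroupWithZero G₀] [TopologicalSpace G₀]
    [ContinuousInv₀ G₀] [ContinuousMul G₀] {u : ℕ → G₀} {L : G₀}
    (hu : Tendsto u atTop (𝓝 L)) (hL : L ≠ 0) :
    Tendsto (fun q => u (q + 1) / u q) atTop (𝓝 1) := by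
  rw [← div_self hL]
  exact ((tendsto_add_atTop_iff_nat 1).2 hu).div hu hL

section NormedField

variable {𝕜 : Type*} [NormedField 𝕜] {z : 𝕜}

theorem tendsto_norm_one_sub_pow_of_norm_lt_one (hz : ‖z‖ < 1) :
    Tendsto (fun q : ℕ => ‖1 - z ^ q‖) atTop (𝓝 1) := by
  simpa using
    ((tendsto_const_nhds (x := (1 : 𝕜))).sub (tendsto_pow_atTop_nhds_zero_of_norm_lt_one hz)).norm

theorem norm_one_sub_pow_eq_norm_pow_mul (hz : z ≠ 0) (q : ℕ) :
    ‖1 - z ^ q‖ = ‖z‖ ^ q * ‖1 - z⁻¹ ^ q‖ := by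
  have hinv : z ^ q * z⁻¹ ^ q = 1 := by
    rw [inv_pow, mul_inv_cancel₀ (pow_ne_zero q hz)]
  rw [← norm_pow, ← norm_mul, mul_sub, mul_one, hinv, norm_sub_rev]

theorem tendsto_norm_one_sub_pow_succ_div (hz : ‖z‖ ≠ 1) :
    Tendsto (fun q : ℕ => ‖1 - z ^ (q + 1)‖ / ‖1 - z ^ q‖) atTop (𝓝 (max 1 ‖z‖)) := by
  rcases hz.lt_or_gt with hlt | hgt
  · rw [max_eq_left hlt.le]
    exact (tendsto_norm_one_sub_pow_of_norm_lt_one hlt).div_succ_of_ne_zero one_ne_zero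
  · have hz0 : z ≠ 0 := norm_pos_iff.1 (one_pos.trans hgt)
    have hinv : ‖z⁻¹‖ < 1 := by rw [norm_inv]; exact inv_lt_one_of_one_lt₀ hgt
    have hratio : ∀ q : ℕ, ‖1 - z ^ (q + 1)‖ / ‖1 - z ^ q‖
        = ‖z‖ * (‖1 - z⁻¹ ^ (q + 1)‖ / ‖1 - z⁻¹ ^ q‖) := fun q => by
      rw [norm_one_sub_pow_eq_norm_pow_mul hz0, norm_one_sub_pow_eq_norm_pow_mul hz0, pow_succ,
        mul_comm (‖z‖ ^ q), mul_assoc, mul_div_assoc,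
        mul_div_mul_left _ _ (pow_ne_zero q (norm_ne_zero_iff.2 hz0))]
    rw [max_eq_right hgt.le, funext hratio]
    simpa using ((tendsto_norm_one_sub_pow_of_norm_lt_one hinv).div_succ_of_ne_zero
      one_ne_zero).const_mul ‖z‖

theorem tendsto_norm_prod_one_sub_pow_succ_div {ι : Type*} (s : Finset ι) {z : ι → 𝕜}
    (hz : ∀ i ∈ s, ‖z i‖ ≠ 1) :
    Tendsto (fun q : ℕ => ‖∏ i ∈ s, (1 - z i ^ (q + 1))‖ / ‖∏ i ∈ s, (1 - z i ^ q)‖) atTop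
      (𝓝 (∏ i ∈ s, max 1 ‖z i‖)) := by
  simp only [norm_prod, ← Finset.prod_div_distrib]
  exact tendsto_finsetProd s fun i hi => tendsto_norm_one_sub_pow_succ_div (hz i hi)

end NormedField

theorem stmt_18_general
    (d : ℕ)
    (αs : Fin d → ℂ)
    (hmod : ∀ i, ‖αs i‖ ≠ 1)
    (Δ : ℕ → ℝ) (hΔ : ∀ q, Δ q = ‖∏ i, (1 - αs i ^ q)‖) :
    Tendsto (fun q : ℕ => Δ (q + 1) / Δ q) atTop
      (nhds (∏ i, max 1 ‖αs i‖)) := by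
  simp only [hΔ]
  exact tendsto_norm_prod_one_sub_pow_succ_div Finset.univ fun i _ => hmod i

/-- Lehmer's limit: the ratio of consecutive Pierce numbers of an algebraic
integer with no conjugate of modulus `1` tends to its Mahler measure. -/
theorem stmt_18
    (α : ℂ) (hint : IsIntegral ℤ α)
    (d : ℕ) (hd : d = (minpoly ℚ α).natDegree) (hd1 : 0 < d)
    (αs : Fin d → ℂ)
    (hroots : (minpoly ℚ α).map (algebraMap ℚ ℂ) = ∏ i, (X - C (αs i)))
    (hα0 : αs ⟨0, hd1⟩ = α)
    (hmod : ∀ i, ‖αs i‖ ≠ 1)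
    (Δ : ℕ → ℝ) (hΔ : ∀ q, Δ q = ‖∏ i, (1 - αs i ^ q)‖) :
    Tendsto (fun q : ℕ => Δ (q + 1) / Δ q) atTop
      (nhds (∏ i, max 1 ‖αs i‖)) :=
  stmt_18_general d αs hmod Δ hΔ
end
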